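/- arXiv:math/0503442 — 4 statements merged into one kernel-verified Lean document; each statement's English description precedes it below -/
import Mathlib

section
/- Let A be an m×n real matrix with singular values σ₁ ≥ σ₂ ≥ …, let à be a d×n matrix, and let P_k be the orthogonal projection onto the span of the top k left singular vectors of Ãᵀ (equivalently, onto the top k right singular vectors of Ã, viewed as a projection on ℝⁿ). Then ‖A − A P_k‖₂² ≤ σ_{k+1}(A)² + 2‖AᵀA − ÃᵀÃ‖₂. -/
open scoped Classical
noncomputable section

/-- Spectral (ℓ₂→ℓ₂ operator) norm of a real matrix. -/
def spec {m n : ℕ} (A : Matrix (Fin m) (Fin n) ℝ) : ℝ :=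
  ‖LinearMap.toContinuousLinearMap (Matrix.toEuclideanLin A)‖

/-- k-th largest value (0-indexed) of a finite family, 0 beyond range. -/
def kthVal {n : ℕ} (f : Fin n → ℝ) (k : ℕ) : ℝ :=
  ((List.ofFn f).insertionSort (fun a b => b ≤ a)).getD k 0

/-- (k+1)-st largest singular value (0-indexed k): square root of the
(k+1)-st largest eigenvalue of AᵀA. -/
def singVal {m n : ℕ} (A : Matrix (Fin m) (Fin n) ℝ) (k : ℕ) : ℝ :=
  Real.sqrt (kthVal (Matrix.isHermitian_conjTranspose_mul_self A).eigenvalues k)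

/-!
Write `E = AᵀA - ÃᵀÃ` and `y = x - P x`, a combination of the eigenvectors of `ÃᵀÃ` that `e`
does not select. Then `‖(A - A P) x‖² = ‖A y‖² = ⟪y, E y⟫ + ⟪y, ÃᵀÃ y⟫`; the first term is at
most `‖E‖ ‖y‖²` and the second at most `μ ‖y‖²`, where `μ` is the largest unselected eigenvalue of
`ÃᵀÃ`. Weyl's inequality `μ ≤ σ_{k+1}(A)² + ‖E‖` follows from a dimension count: the `k + 1`
eigenvectors of `ÃᵀÃ` for its top `k` eigenvalues and `μ` span a space meeting the span of the
eigenvectors of `AᵀA` outside its top `k` in some `z ≠ 0`, and the Rayleigh quotients of `E`,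
`AᵀA` and `ÃᵀÃ` at `z` compare. Finally `‖y‖ ≤ ‖x‖`.
-/

open scoped RealInnerProductSpace
open Finset Function

namespace OrthonormalBasis

variable {ι E : Type*} [Fintype ι] [NormedAddCommGroup E] [InnerProductSpace ℝ E]
  (b : OrthonormalBasis ι ℝ E) {T : E →ₗ[ℝ] E} {μ : ι → ℝ}

theorem inner_map_self_eq_sum_of_apply_eq_smul (hT : ∀ i, T (b i) = μ i • b i) (z : E) :
    ⟪z, T z⟫ = ∑ i, μ i * ⟪b i, z⟫ ^ 2 := by
  have hTz : T z = ∑ i, (μ i * ⟪b i, z⟫) • b i := by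
    conv_lhs => rw [← b.sum_repr' z]
    simp only [map_sum, map_smul, hT, smul_smul, mul_comm]
  simp only [hTz, inner_sum, real_inner_smul_right, real_inner_comm z]
  exact sum_congr rfl fun i _ => by ring

theorem inner_map_self_le_of_apply_eq_smul (hT : ∀ i, T (b i) = μ i • b i) {z : E} {c : ℝ}
    (h : ∀ i, ⟪b i, z⟫ ≠ 0 → μ i ≤ c) : ⟪z, T z⟫ ≤ c * ‖z‖ ^ 2 := by
  rw [b.inner_map_self_eq_sum_of_apply_eq_smul hT, ← b.sum_sq_inner_right, mul_sum]
  refine sum_le_sum fun i _ => ?_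
  by_cases hi : ⟪b i, z⟫ = 0
  · simp [hi]
  · exact mul_le_mul_of_nonneg_right (h i hi) (sq_nonneg _)

theorem le_inner_map_self_of_apply_eq_smul (hT : ∀ i, T (b i) = μ i • b i) {z : E} {c : ℝ}
    (h : ∀ i, ⟪b i, z⟫ ≠ 0 → c ≤ μ i) : c * ‖z‖ ^ 2 ≤ ⟪z, T z⟫ := by
  rw [b.inner_map_self_eq_sum_of_apply_eq_smul hT, ← b.sum_sq_inner_right, mul_sum]
  refine sum_le_sum fun i _ => ?_
  by_cases hi : ⟪b i, z⟫ = 0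
  · simp [hi]
  · exact mul_le_mul_of_nonneg_right (h i hi) (sq_nonneg _)

variable {κ : Type*} [Fintype κ] {e : κ → ι}

theorem inner_sub_sum_inner_smul_of_mem_range (he : Injective e) (x : E) {j : ι}
    (hj : j ∈ Set.range e) : ⟪b j, x - ∑ i, ⟪b (e i), x⟫ • b (e i)⟫ = 0 := by
  obtain ⟨i₀, rfl⟩ := hj
  simp [inner_sub_right, inner_sum, real_inner_smul_right, orthonormal_iff_ite.1 b.orthonormal,
    he.eq_iff]

theorem inner_sub_sum_inner_smul_of_notMem_range (x : E) {j : ι} (hj : j ∉ Set.range e) :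
    ⟪b j, x - ∑ i, ⟪b (e i), x⟫ • b (e i)⟫ = ⟪b j, x⟫ := by
  have horth : ∀ i, ⟪b j, b (e i)⟫ = 0 := fun i =>
    b.orthonormal.2 fun h => hj ⟨i, h.symm⟩
  simp [inner_sub_right, inner_sum, real_inner_smul_right, horth]

theorem norm_sub_sum_inner_smul_le (he : Injective e) (x : E) :
    ‖x - ∑ i, ⟪b (e i), x⟫ • b (e i)‖ ≤ ‖x‖ := by
  refine (pow_le_pow_iff_left₀ (norm_nonneg _) (norm_nonneg _) two_ne_zero).1 ?_
  rw [← b.sum_sq_inner_right, ← b.sum_sq_inner_right]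
  refine sum_le_sum fun j _ => ?_
  by_cases hj : j ∈ Set.range e
  · simp [b.inner_sub_sum_inner_smul_of_mem_range he x hj, sq_nonneg]
  · rw [b.inner_sub_sum_inner_smul_of_notMem_range x hj]

end OrthonormalBasis

theorem exists_ne_zero_forall_inner_eq_zero {𝕜 ι E : Type*} [RCLike 𝕜] [Fintype ι]
    [NormedAddCommGroup E] [InnerProductSpace 𝕜 E] [FiniteDimensional 𝕜 E] (v : ι → E)
    (h : Fintype.card ι < Module.finrank 𝕜 E) : ∃ z ≠ 0, ∀ i, inner 𝕜 (v i) z = 0 := by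
  let L : E →ₗ[𝕜] ι → 𝕜 := LinearMap.pi fun i => innerₛₗ 𝕜 (v i)
  have hL : LinearMap.ker L ≠ ⊥ :=
    LinearMap.ker_ne_bot_of_finrank_lt (by rwa [Module.finrank_fintype_fun_eq_card])
  obtain ⟨z, hz, hz0⟩ := (Submodule.ne_bot_iff _).1 hL
  exact ⟨z, hz0, fun i => congrFun (LinearMap.mem_ker.1 hz) i⟩

namespace Matrix

variable {m n : Type*} [Fintype n] [DecidableEq n]

theorem toEuclideanLin_sub_mul (A : Matrix m n ℝ) (P : Matrix n n ℝ) (x : EuclideanSpace ℝ n) :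
    toEuclideanLin (A - A * P) x = toEuclideanLin A (x - toEuclideanLin P x) := by
  simp [sub_eq_add_neg]

theorem norm_toEuclideanLin_apply_sq [Fintype m] (A : Matrix m n ℝ) (x : EuclideanSpace ℝ n) :
    ‖toEuclideanLin A x‖ ^ 2 = ⟪x, toEuclideanLin (Aᴴ * A) x⟫ := by
  rw [toLpLin_mul_same, LinearMap.comp_apply, toEuclideanLin_conjTranspose_eq_adjoint,
    LinearMap.adjoint_inner_right, real_inner_self_eq_norm_sq]

theorem toEuclideanLin_vecMulVec_self (u x : EuclideanSpace ℝ n) :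
    toEuclideanLin (vecMulVec (fun a => u a) (fun a => u a)) x = ⟪u, x⟫ • u := by
  have h := InnerProductSpace.symm_toEuclideanLin_rankOne u u
  rw [star_trivial] at h
  rw [← h, LinearEquiv.apply_symm_apply]
  rfl

theorem inner_toEuclideanLin_sub_self (M N : Matrix n n ℝ) (x : EuclideanSpace ℝ n) :
    ⟪x, toEuclideanLin (M - N) x⟫ = ⟪x, toEuclideanLin M x⟫ - ⟪x, toEuclideanLin N x⟫ := by
  rw [map_sub, LinearMap.sub_apply, inner_sub_right]

theorem IsHermitian.toEuclideanLin_eigenvectorBasis {M : Matrix n n ℝ} (hM : M.IsHermitian)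
    (j : n) :
    toEuclideanLin M (hM.eigenvectorBasis j) = hM.eigenvalues j • hM.eigenvectorBasis j := by
  ext i
  simpa [toLpLin_apply] using congrFun (hM.mulVec_eigenvectorBasis j) i

end Matrix

open Matrix

section spec

variable {m n : ℕ}

theorem spec_nonneg (A : Matrix (Fin m) (Fin n) ℝ) : 0 ≤ spec A :=
  norm_nonneg _

theorem norm_toEuclideanLin_apply_le_spec (A : Matrix (Fin m) (Fin n) ℝ)
    (x : EuclideanSpace ℝ (Fin n)) : ‖toEuclideanLin A x‖ ≤ spec A * ‖x‖ :=
  (LinearMap.toContinuousLinearMap (toEuclideanLin A)).le_opNorm x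

theorem abs_inner_toEuclideanLin_self_le_spec (M : Matrix (Fin n) (Fin n) ℝ)
    (x : EuclideanSpace ℝ (Fin n)) : |⟪x, toEuclideanLin M x⟫| ≤ spec M * ‖x‖ ^ 2 :=
  calc |⟪x, toEuclideanLin M x⟫| ≤ ‖x‖ * ‖toEuclideanLin M x‖ := abs_real_inner_le_norm _ _
    _ ≤ ‖x‖ * (spec M * ‖x‖) := by gcongr; exact norm_toEuclideanLin_apply_le_spec M x
    _ = spec M * ‖x‖ ^ 2 := by ring

theorem spec_sq_le_of_forall_norm_sq_le (A : Matrix (Fin m) (Fin n) ℝ) {C : ℝ} (hC : 0 ≤ C)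
    (h : ∀ x, ‖toEuclideanLin A x‖ ^ 2 ≤ C * ‖x‖ ^ 2) : spec A ^ 2 ≤ C := by
  have hbound : spec A ≤ √C := ContinuousLinearMap.opNorm_le_bound _ (Real.sqrt_nonneg C)
    fun x => by
      rw [← Real.sqrt_sq (norm_nonneg _), ← Real.sqrt_sq (norm_nonneg x), ← Real.sqrt_mul hC]
      exact Real.sqrt_le_sqrt (h x)
  simpa [Real.sq_sqrt hC] using pow_le_pow_left₀ (spec_nonneg A) hbound 2

end spec

theorem card_filter_univ_eq_countP_ofFn {α : Type*} {n : ℕ} (f : Fin n → α) (p : α → Prop)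
    [DecidablePred p] : #{j | p (f j)} = (List.ofFn f).countP (fun a => decide (p a)) := by
  rw [List.ofFn_eq_map, List.countP_map, List.countP_eq_length_filter, Fin.univ_def]
  rfl

theorem kthVal_nonneg {n : ℕ} {f : Fin n → ℝ} (hf : ∀ j, 0 ≤ f j) (k : ℕ) : 0 ≤ kthVal f k := by
  rw [kthVal, List.getD_eq_getElem?_getD]
  cases h : ((List.ofFn f).insertionSort (fun a b => b ≤ a))[k]? with
  | none => exact le_rfl
  | some a =>
    obtain ⟨j, rfl⟩ := List.mem_ofFn.1 ((List.mem_insertionSort _).1 (List.mem_of_getElem? h))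
    exact hf j

theorem card_filter_kthVal_lt_le {n k : ℕ} (f : Fin n → ℝ) (hk : k < n) :
    #{j | kthVal f k < f j} ≤ k := by
  set l := (List.ofFn f).insertionSort (fun a b => b ≤ a)
  have hkl : k < l.length := by simpa [l] using hk
  have hdrop : ∀ a ∈ l.drop k, a ≤ kthVal f k := by
    have hsorted := (List.pairwise_insertionSort (fun a b : ℝ => b ≤ a) (List.ofFn f)).sublist
      (List.drop_sublist k l)
    rw [kthVal, List.getD_eq_getElem _ _ hkl]
    rw [List.drop_eq_getElem_cons hkl] at hsorted ⊢
    intro a ha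
    rcases List.mem_cons.1 ha with rfl | ha
    · exact le_rfl
    · exact List.rel_of_pairwise_cons hsorted ha
  have hperm : l.Perm (List.ofFn f) := List.perm_insertionSort _ _
  rw [card_filter_univ_eq_countP_ofFn, ← hperm.countP_eq,
    ← List.take_append_drop k l, List.countP_append,
    (List.countP_eq_zero (l := l.drop k)).2 fun a ha => by simpa using hdrop a ha, add_zero]
  exact List.countP_le_length.trans (by simp)

theorem exists_card_eq_forall_notMem_le_kthVal {n k : ℕ} (f : Fin n → ℝ) (hk : k ≤ n) :
    ∃ T : Finset (Fin n), #T = k ∧ ∀ j ∉ T, f j ≤ kthVal f k := by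
  rcases hk.eq_or_lt with rfl | hk
  · exact ⟨univ, by simp, fun j hj => absurd (mem_univ j) hj⟩
  obtain ⟨T, hsub, hcard⟩ := exists_superset_card_eq (card_filter_kthVal_lt_le f hk)
    (by simpa using hk.le)
  exact ⟨T, hcard, fun j hj => not_lt.1 fun h => hj (hsub (by simpa using h))⟩

theorem Matrix.IsHermitian.eigenvalues_le_kthVal_add_spec_sub {n k : ℕ}
    {M B : Matrix (Fin n) (Fin n) ℝ} (hM : M.IsHermitian) (hB : B.IsHermitian)
    {e : Fin k → Fin n} (he : Injective e)
    (htop : ∀ i j, j ∉ Set.range e → hB.eigenvalues j ≤ hB.eigenvalues (e i))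
    {j : Fin n} (hj : j ∉ Set.range e) :
    hB.eigenvalues j ≤ kthVal hM.eigenvalues k + spec (M - B) := by
  set b := hB.eigenvectorBasis
  set w := hM.eigenvectorBasis
  have hk : k ≤ n := by simpa using Fintype.card_le_of_injective e he
  obtain ⟨T, hTcard, hT⟩ := exists_card_eq_forall_notMem_le_kthVal hM.eigenvalues hk
  set S := insert j (univ.image e)
  -- `z` lies in the span of the `b i` with `i ∈ S` and in that of the `w l` with `l ∉ T`.
  have hS : #S = k + 1 := by
    rw [card_insert_of_notMem (by simpa using hj), card_image_of_injective _ he, card_fin]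
  have hSn : #S ≤ n := by simpa using card_le_univ S
  obtain ⟨z, hz0, hz⟩ := exists_ne_zero_forall_inner_eq_zero (𝕜 := ℝ)
    (Sum.elim (fun i : ↥Sᶜ => b i) (fun l : ↥T => w l))
    (by simp only [Fintype.card_sum, Fintype.card_coe, card_compl, hS, hTcard,
      Fintype.card_fin, finrank_euclideanSpace_fin]; omega)
  have hzb : ∀ i, ⟪b i, z⟫ ≠ 0 → hB.eigenvalues j ≤ hB.eigenvalues i := by
    intro i hi
    have hiS : i ∈ S := by_contra fun h => hi (hz (Sum.inl ⟨i, mem_compl.2 h⟩))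
    rcases mem_insert.1 hiS with rfl | hi'
    · exact le_rfl
    · obtain ⟨i', -, rfl⟩ := mem_image.1 hi'
      exact htop i' j hj
  have hzw : ∀ l, ⟪w l, z⟫ ≠ 0 → hM.eigenvalues l ≤ kthVal hM.eigenvalues k := fun l hl =>
    hT l fun hlT => hl (hz (Sum.inr ⟨l, hlT⟩))
  have hlow := b.le_inner_map_self_of_apply_eq_smul hB.toEuclideanLin_eigenvectorBasis hzb
  have hup := w.inner_map_self_le_of_apply_eq_smul hM.toEuclideanLin_eigenvectorBasis hzw
  have hE := neg_le_of_abs_le (abs_inner_toEuclideanLin_self_le_spec (M - B) z)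
  rw [inner_toEuclideanLin_sub_self] at hE
  refine le_of_mul_le_mul_right ?_ (by positivity : 0 < ‖z‖ ^ 2)
  linarith

/-- Drineas–Kannan lemma: if `P` is the orthogonal projection onto the span of
the top `k` right singular vectors of `Ã` (i.e. eigenvectors of `ÃᵀÃ`
corresponding to its `k` largest eigenvalues, selected by the injection `e`),
then `‖A − A P‖₂² ≤ σ_{k+1}(A)² + 2‖AᵀA − ÃᵀÃ‖₂`. -/
theorem low_rank_comparison {m n d k : ℕ}
    (A : Matrix (Fin m) (Fin n) ℝ) (At : Matrix (Fin d) (Fin n) ℝ)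
    (hB : (At.conjTranspose * At).IsHermitian)
    (e : Fin k → Fin n) (he : Function.Injective e)
    (htop : ∀ (i : Fin k) (j : Fin n), j ∉ Set.range e →
      hB.eigenvalues j ≤ hB.eigenvalues (e i))
    (P : Matrix (Fin n) (Fin n) ℝ)
    (hP : P = ∑ i : Fin k,
      Matrix.vecMulVec (fun a => hB.eigenvectorBasis (e i) a)
        (fun a => hB.eigenvectorBasis (e i) a)) :
    spec (A - A * P) ^ 2 ≤
      singVal A k ^ 2 + 2 * spec (A.conjTranspose * A - At.conjTranspose * At) := by
  have hA := isHermitian_conjTranspose_mul_self A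
  set E := Aᴴ * A - Atᴴ * At
  set t := kthVal hA.eigenvalues k
  set b := hB.eigenvectorBasis
  have ht : 0 ≤ t := kthVal_nonneg (eigenvalues_conjTranspose_mul_self_nonneg A) k
  rw [singVal, Real.sq_sqrt ht]
  refine spec_sq_le_of_forall_norm_sq_le _ (by linarith [spec_nonneg E]) fun x => ?_
  have hPx : toEuclideanLin P x = ∑ i, ⟪b (e i), x⟫ • b (e i) := by
    simp only [hP, map_sum, LinearMap.sum_apply, toEuclideanLin_vecMulVec_self, b]
  set y := x - ∑ i, ⟪b (e i), x⟫ • b (e i)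
  have hBy : ⟪y, toEuclideanLin (Atᴴ * At) y⟫ ≤ (t + spec E) * ‖y‖ ^ 2 :=
    b.inner_map_self_le_of_apply_eq_smul hB.toEuclideanLin_eigenvectorBasis fun j hj =>
      hA.eigenvalues_le_kthVal_add_spec_sub hB he htop fun hjr =>
        hj (b.inner_sub_sum_inner_smul_of_mem_range he x hjr)
  have hEy := le_of_abs_le (abs_inner_toEuclideanLin_self_le_spec E y)
  calc ‖toEuclideanLin (A - A * P) x‖ ^ 2 = ‖toEuclideanLin A y‖ ^ 2 := by
        rw [toEuclideanLin_sub_mul, hPx]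
    _ = ⟪y, toEuclideanLin E y⟫ + ⟪y, toEuclideanLin (Atᴴ * At) y⟫ := by
        rw [norm_toEuclideanLin_apply_sq, inner_toEuclideanLin_sub_self, sub_add_cancel]
    _ ≤ spec E * ‖y‖ ^ 2 + (t + spec E) * ‖y‖ ^ 2 := add_le_add hEy hBy
    _ = (t + 2 * spec E) * ‖y‖ ^ 2 := by ring
    _ ≤ (t + 2 * spec E) * ‖x‖ ^ 2 := by
      gcongr
      · linarith [spec_nonneg E]
      · exact b.norm_sub_sum_inner_smul_le he x
end
end

section
/- Decoupling lemma (Bourgain–Tzafriri): Let ξ₁,…,ξ_n be bounded i.i.d. real random variables and ξ'₁,…,ξ'_n an independent copy of the sequence. Then for any vectors x_{ij} in a Banach space with x_{ii} = 0 for all i, E‖∑_{i,j} ξ_i ξ_j x_{ij}‖ ≤ 20 E‖∑_{i,j} ξ_i ξ'_j x_{ij}‖. -/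
/-!
Write `D(u, v) = ∑ᵢⱼ uᵢ vⱼ xᵢⱼ` (this is `chaos x`) and `1_S u` for `S.piecewise u 0`, and
realise `(ξ, ξ')` on two independent copies of `ν^ι`, where `ν` is the common law. If `ν` is
centred, `1_S u` is the conditional expectation of `u` given its coordinates in `S`, so by Jensen
`E‖D(1_S ξ, 1_T ξ')‖ ≤ E‖D(ξ, ξ')‖`. Since `(1_S ξ, 1_{Sᶜ} ξ)` has the law of
`(1_S ξ, 1_{Sᶜ} ξ')` and, the diagonal being zero, `∑_S D(1_S u, 1_{Sᶜ} u) = 2^{n-2} D(u, u)`,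
averaging over the `2^n` sets `S` gives the constant `4`. For a general `ν` with mean `m`, expand
`D(u, v) = D(u - m, v - m) + D(u, m) + D(m, v) - D(m, m)`: by Jensen each of the three terms
involving `m` is at most `E‖D(ξ, ξ')‖` in mean, whence `4 · 4 + 3 ≤ 20`.
-/

open MeasureTheory ProbabilityTheory
noncomputable section

open Finset

theorem Continuous.integrable_of_ae_mem {X E : Type*} [TopologicalSpace X] [T2Space X]
    [MeasurableSpace X] [OpensMeasurableSpace X] [NormedAddCommGroup E] {μ : Measure X}
    [IsFiniteMeasureOnCompacts μ] {K : Set X} (hK : IsCompact K) (hμK : ∀ᵐ x ∂μ, x ∈ K)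
    {g : X → E} (hg : Continuous g) : Integrable g μ := by
  have := hg.continuousOn.integrableOn_compact (μ := μ) hK
  rwa [IntegrableOn, Measure.restrict_eq_self_of_ae_mem hμK] at this

theorem ae_mem_univ_pi {ι : Type*} [Fintype ι] {α : ι → Type*} [∀ i, MeasurableSpace (α i)]
    {μ : ∀ i, Measure (α i)} [∀ i, SigmaFinite (μ i)] {s : ∀ i, Set (α i)}
    (h : ∀ i, ∀ᵐ x ∂μ i, x ∈ s i) : ∀ᵐ a ∂Measure.pi μ, a ∈ Set.univ.pi s := by
  simp only [Set.mem_univ_pi, ae_all_iff]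
  exact fun i => Measure.tendsto_eval_ae_ae (h i)

theorem ae_mem_prod {α β : Type*} [MeasurableSpace α] [MeasurableSpace β] {μ : Measure α}
    {ν : Measure β} {s : Set α} {t : Set β} (hs : ∀ᵐ x ∂μ, x ∈ s)
    (ht : ∀ᵐ y ∂ν, y ∈ t) : ∀ᵐ p ∂μ.prod ν, p ∈ s ×ˢ t :=
  (Measure.quasiMeasurePreserving_fst.ae hs).and (Measure.quasiMeasurePreserving_snd.ae ht)

theorem MeasureTheory.MeasurePreserving.integral_comp_of_aestronglyMeasurable {α β G : Type*}
    [MeasurableSpace α] [MeasurableSpace β] [NormedAddCommGroup G] [NormedSpace ℝ G]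
    {μ : Measure α} {ν : Measure β} {f : α → β} (hf : MeasurePreserving f μ ν) {g : β → G}
    (hg : AEStronglyMeasurable g ν) : ∫ x, g (f x) ∂μ = ∫ y, g y ∂ν := by
  rw [← hf.map_eq, integral_map hf.measurable.aemeasurable (hf.map_eq ▸ hg)]

section FubiniJensen

variable {α β F : Type*} [MeasurableSpace α] [MeasurableSpace β] [NormedAddCommGroup F]
  [NormedSpace ℝ F] {μ : Measure α} {ν : Measure β} [SFinite μ] [SFinite ν] {f : α × β → F}

theorem integral_norm_integral_snd_le (hf : Integrable f (μ.prod ν)) :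
    ∫ x, ‖∫ y, f (x, y) ∂ν‖ ∂μ ≤ ∫ z, ‖f z‖ ∂μ.prod ν := by
  rw [integral_prod _ hf.norm]
  exact integral_mono hf.integral_prod_left.norm hf.norm.integral_prod_left
    fun x => norm_integral_le_integral_norm _

theorem integral_norm_integral_fst_le (hf : Integrable f (μ.prod ν)) :
    ∫ y, ‖∫ x, f (x, y) ∂μ‖ ∂ν ≤ ∫ z, ‖f z‖ ∂μ.prod ν := by
  rw [integral_prod_symm _ hf.norm]
  exact integral_mono hf.integral_prod_right.norm hf.norm.integral_prod_right
    fun y => norm_integral_le_integral_norm _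

end FubiniJensen

theorem measurePreserving_piecewise {ι : Type*} [Fintype ι] [DecidableEq ι] {α : ι → Type*}
    [∀ i, MeasurableSpace (α i)] (μ : ∀ i, Measure (α i)) [∀ i, IsProbabilityMeasure (μ i)]
    (S : Finset ι) :
    MeasurePreserving (fun p : (∀ i, α i) × (∀ i, α i) => S.piecewise p.1 p.2)
      ((Measure.pi μ).prod (Measure.pi μ)) (Measure.pi μ) := by
  have hmeas : Measurable fun p : (∀ i, α i) × (∀ i, α i) => S.piecewise p.1 p.2 :=
    measurable_pi_lambda _ fun i => by
      by_cases hi : i ∈ S <;> simp only [Finset.piecewise, hi, if_true, if_false] <;> fun_prop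
  refine ⟨hmeas, (Measure.pi_eq fun s hs => ?_).symm⟩
  have hpre : (fun p : (∀ i, α i) × (∀ i, α i) => S.piecewise p.1 p.2) ⁻¹' Set.univ.pi s =
      Set.univ.pi (S.piecewise s fun _ => Set.univ) ×ˢ
        Set.univ.pi (S.piecewise (fun _ => Set.univ) s) := by
    ext p
    simp only [Set.mem_preimage, Set.mem_univ_pi, Set.mem_prod, ← forall_and]
    refine forall_congr' fun i => ?_
    by_cases hi : i ∈ S <;> simp [hi]
  rw [Measure.map_apply hmeas (.univ_pi hs), hpre, Measure.prod_prod, Measure.pi_pi,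
    Measure.pi_pi, ← Finset.prod_mul_distrib]
  refine Finset.prod_congr rfl fun i _ => ?_
  by_cases hi : i ∈ S <;> simp [hi]

@[fun_prop]
theorem Continuous.finset_piecewise {X ι : Type*} [TopologicalSpace X] {α : ι → Type*}
    [∀ i, TopologicalSpace (α i)] (S : Finset ι) [∀ i, Decidable (i ∈ S)]
    {f g : X → ∀ i, α i} (hf : Continuous f) (hg : Continuous g) :
    Continuous fun x => S.piecewise (f x) (g x) :=
  continuous_pi fun i => by
    by_cases hi : i ∈ S <;> simp only [Finset.piecewise, hi, if_true, if_false] <;> fun_prop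

theorem norm_apply_sub_apply_sub_sub_le {V G : Type*} [NormedAddCommGroup V] [NormedSpace ℝ V]
    [NormedAddCommGroup G] [NormedSpace ℝ G] (B : V →L[ℝ] V →L[ℝ] G) (u v w : V) :
    ‖B u v - B (u - w) (v - w)‖ ≤ ‖B u w‖ + ‖B w v‖ + ‖B w w‖ := by
  have hexpand : B u v - B (u - w) (v - w) = B u w + B w v - B w w := by
    simp only [map_sub, sub_apply]
    abel
  rw [hexpand]
  exact (norm_sub_le _ _).trans (add_le_add_left (norm_add_le _ _) _)

section BoundedLaw

variable {ι F : Type*} [Fintype ι] [NormedAddCommGroup F] {ν : Measure ℝ}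
  [IsProbabilityMeasure ν] {C : ℝ}

theorem integrable_pi_of_continuous (hν : ∀ᵐ t ∂ν, |t| ≤ C) {g : (ι → ℝ) → F}
    (hg : Continuous g) : Integrable g (Measure.pi fun _ => ν) :=
  hg.integrable_of_ae_mem (isCompact_univ_pi fun _ => isCompact_Icc)
    (ae_mem_univ_pi fun _ => hν.mono fun _ => abs_le.1)

theorem integrable_prod_pi_of_continuous (hν : ∀ᵐ t ∂ν, |t| ≤ C)
    {g : (ι → ℝ) × (ι → ℝ) → F} (hg : Continuous g) :
    Integrable g ((Measure.pi fun _ => ν).prod (Measure.pi fun _ => ν)) := by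
  have hK := isCompact_univ_pi fun _ : ι => isCompact_Icc (a := -C) (b := C)
  have hμK := ae_mem_univ_pi (μ := fun _ : ι => ν) fun _ => hν.mono fun _ => abs_le.1
  exact hg.integrable_of_ae_mem (hK.prod hK) (ae_mem_prod hμK hμK)

variable [NormedSpace ℝ F] [CompleteSpace F]

theorem integral_pi_continuousLinearMap (hν : ∀ᵐ t ∂ν, |t| ≤ C) (Λ : (ι → ℝ) →L[ℝ] F) :
    ∫ a, Λ a ∂(Measure.pi fun _ => ν) = Λ fun _ => ∫ t, t ∂ν := by
  rw [Λ.integral_comp_comm (integrable_pi_of_continuous hν (g := fun a => a) continuous_id)]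
  congr 1 with i
  rw [eval_integral fun i => integrable_pi_of_continuous hν (continuous_apply i)]
  exact integral_comp_eval (μ := fun _ => ν) (f := id) aestronglyMeasurable_id

theorem integral_norm_apply_mean_le (hν : ∀ᵐ t ∂ν, |t| ≤ C)
    (B : (ι → ℝ) →L[ℝ] (ι → ℝ) →L[ℝ] F) :
    ∫ a, ‖B a fun _ => ∫ t, t ∂ν‖ ∂(Measure.pi fun _ => ν)
      ≤ ∫ p, ‖B p.1 p.2‖ ∂(Measure.pi fun _ => ν).prod (Measure.pi fun _ => ν) := by
  simp_rw [← integral_pi_continuousLinearMap hν (B _)]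
  exact integral_norm_integral_snd_le (f := fun p => B p.1 p.2)
    (integrable_prod_pi_of_continuous hν (by fun_prop))

theorem integral_norm_mean_apply_le (hν : ∀ᵐ t ∂ν, |t| ≤ C)
    (B : (ι → ℝ) →L[ℝ] (ι → ℝ) →L[ℝ] F) :
    ∫ b, ‖B (fun _ => ∫ t, t ∂ν) b‖ ∂(Measure.pi fun _ => ν)
      ≤ ∫ p, ‖B p.1 p.2‖ ∂(Measure.pi fun _ => ν).prod (Measure.pi fun _ => ν) := by
  simp_rw [← B.flip_apply, ← integral_pi_continuousLinearMap hν (B.flip _),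
    ContinuousLinearMap.flip_apply]
  exact integral_norm_integral_fst_le (f := fun p => B p.1 p.2)
    (integrable_prod_pi_of_continuous hν (by fun_prop))

theorem norm_mean_mean_le (hν : ∀ᵐ t ∂ν, |t| ≤ C) (B : (ι → ℝ) →L[ℝ] (ι → ℝ) →L[ℝ] F) :
    ‖B (fun _ => ∫ t, t ∂ν) fun _ => ∫ t, t ∂ν‖
      ≤ ∫ a, ‖B a fun _ => ∫ t, t ∂ν‖ ∂(Measure.pi fun _ : ι => ν) := by
  rw [← B.flip_apply, ← integral_pi_continuousLinearMap hν]
  exact norm_integral_le_integral_norm _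

theorem integral_norm_sub_mean_sub_mean_le (hν : ∀ᵐ t ∂ν, |t| ≤ C)
    (B : (ι → ℝ) →L[ℝ] (ι → ℝ) →L[ℝ] F) :
    ∫ p, ‖B (p.1 - fun _ => ∫ t, t ∂ν) (p.2 - fun _ => ∫ t, t ∂ν)‖
        ∂(Measure.pi fun _ => ν).prod (Measure.pi fun _ => ν)
      ≤ 4 * ∫ p, ‖B p.1 p.2‖ ∂(Measure.pi fun _ => ν).prod (Measure.pi fun _ => ν) := by
  set m : ι → ℝ := fun _ => ∫ t, t ∂ν
  have hP := integral_norm_apply_mean_le hν B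
  have hQ := integral_norm_mean_apply_le hν B
  have hK := norm_mean_mean_le hν B
  calc _ ≤ ∫ p, (‖B p.1 p.2‖ + ‖B p.1 m‖ + ‖B m p.2‖ + ‖B m m‖)
          ∂(Measure.pi fun _ => ν).prod (Measure.pi fun _ => ν) := by
        refine integral_mono (integrable_prod_pi_of_continuous hν (by fun_prop))
          (integrable_prod_pi_of_continuous hν (by fun_prop)) fun p => ?_
        have := norm_apply_sub_apply_sub_sub_le B p.1 p.2 m
        linarith [norm_le_norm_add_norm_sub (B p.1 p.2) (B (p.1 - m) (p.2 - m))]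
    _ = ∫ p, ‖B p.1 p.2‖ ∂(Measure.pi fun _ => ν).prod (Measure.pi fun _ => ν)
          + ∫ a, ‖B a m‖ ∂(Measure.pi fun _ => ν) + ∫ b, ‖B m b‖ ∂(Measure.pi fun _ => ν)
          + ‖B m m‖ := by
        rw [integral_add, integral_add, integral_add, integral_fun_fst (fun a => ‖B a m‖),
          integral_fun_snd (fun b => ‖B m b‖)]
        all_goals first
          | exact integrable_prod_pi_of_continuous hν (by fun_prop)
          | simp
    _ ≤ _ := by linarith

theorem integral_norm_apply_self_le (hν : ∀ᵐ t ∂ν, |t| ≤ C)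
    (B : (ι → ℝ) →L[ℝ] (ι → ℝ) →L[ℝ] F) :
    ∫ a, ‖B a a‖ ∂(Measure.pi fun _ => ν)
      ≤ ∫ a, ‖B (a - fun _ => ∫ t, t ∂ν) (a - fun _ => ∫ t, t ∂ν)‖ ∂(Measure.pi fun _ => ν)
        + 3 * ∫ p, ‖B p.1 p.2‖ ∂(Measure.pi fun _ => ν).prod (Measure.pi fun _ => ν) := by
  set m : ι → ℝ := fun _ => ∫ t, t ∂ν
  have hP := integral_norm_apply_mean_le hν B
  have hQ := integral_norm_mean_apply_le hν B
  have hK := norm_mean_mean_le hν B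
  calc _ ≤ ∫ a, (‖B (a - m) (a - m)‖ + ‖B a m‖ + ‖B m a‖ + ‖B m m‖)
          ∂(Measure.pi fun _ => ν) := by
        refine integral_mono (integrable_pi_of_continuous hν (by fun_prop))
          (integrable_pi_of_continuous hν (by fun_prop)) fun a => ?_
        have := norm_apply_sub_apply_sub_sub_le B a a m
        linarith [norm_le_norm_add_norm_sub' (B a a) (B (a - m) (a - m))]
    _ = ∫ a, ‖B (a - m) (a - m)‖ ∂(Measure.pi fun _ => ν) + ∫ a, ‖B a m‖ ∂(Measure.pi fun _ => ν)
          + ∫ b, ‖B m b‖ ∂(Measure.pi fun _ => ν) + ‖B m m‖ := by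
        rw [integral_add, integral_add, integral_add]
        all_goals first
          | exact integrable_pi_of_continuous hν (by fun_prop)
          | simp
    _ ≤ _ := by linarith

variable [DecidableEq ι]

theorem integral_pi_piecewise (hν : ∀ᵐ t ∂ν, |t| ≤ C) (S : Finset ι) (a : ι → ℝ) :
    ∫ c, S.piecewise a c ∂(Measure.pi fun _ => ν) = S.piecewise a fun _ => ∫ t, t ∂ν := by
  ext i
  rw [eval_integral fun i => integrable_pi_of_continuous hν (by fun_prop)]
  by_cases hi : i ∈ S
  · simp [hi]
  · simpa [hi] using integral_comp_eval (μ := fun _ => ν) (f := id) aestronglyMeasurable_id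

theorem integral_norm_piecewise_zero_le (hν : ∀ᵐ t ∂ν, |t| ≤ C) (hmean : ∫ t, t ∂ν = 0)
    (Λ : (ι → ℝ) →L[ℝ] F) (S : Finset ι) :
    ∫ a, ‖Λ (S.piecewise a 0)‖ ∂(Measure.pi fun _ => ν) ≤ ∫ a, ‖Λ a‖ ∂(Measure.pi fun _ => ν) :=
  calc ∫ a, ‖Λ (S.piecewise a 0)‖ ∂(Measure.pi fun _ => ν)
      = ∫ a, ‖∫ c, Λ (S.piecewise a c) ∂(Measure.pi fun _ => ν)‖ ∂(Measure.pi fun _ => ν) := by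
        congr 1 with a
        rw [Λ.integral_comp_comm (integrable_pi_of_continuous hν (by fun_prop)),
          integral_pi_piecewise hν, hmean]
        rfl
    _ ≤ ∫ p, ‖Λ (S.piecewise p.1 p.2)‖ ∂(Measure.pi fun _ => ν).prod (Measure.pi fun _ => ν) :=
        integral_norm_integral_snd_le (f := fun p => Λ (S.piecewise p.1 p.2))
          (integrable_prod_pi_of_continuous hν (by fun_prop))
    _ = ∫ a, ‖Λ a‖ ∂(Measure.pi fun _ => ν) :=
        (measurePreserving_piecewise _ S).integral_comp_of_aestronglyMeasurable
          (by fun_prop : Continuous fun a => ‖Λ a‖).aestronglyMeasurable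

theorem integral_norm_piecewise_zero_piecewise_zero_le (hν : ∀ᵐ t ∂ν, |t| ≤ C)
    (hmean : ∫ t, t ∂ν = 0) (B : (ι → ℝ) →L[ℝ] (ι → ℝ) →L[ℝ] F) (S T : Finset ι) :
    ∫ p, ‖B (S.piecewise p.1 0) (T.piecewise p.2 0)‖
        ∂(Measure.pi fun _ => ν).prod (Measure.pi fun _ => ν)
      ≤ ∫ p, ‖B p.1 p.2‖ ∂(Measure.pi fun _ => ν).prod (Measure.pi fun _ => ν) := by
  have hST := integrable_prod_pi_of_continuous (ι := ι) hν
    (g := fun p => ‖B (S.piecewise p.1 0) (T.piecewise p.2 0)‖) (by fun_prop)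
  have hT := integrable_prod_pi_of_continuous (ι := ι) hν
    (g := fun p => ‖B p.1 (T.piecewise p.2 0)‖) (by fun_prop)
  have hB := integrable_prod_pi_of_continuous (ι := ι) hν (g := fun p => ‖B p.1 p.2‖) (by fun_prop)
  calc _ = ∫ b, ∫ a, ‖B (S.piecewise a 0) (T.piecewise b 0)‖ ∂(Measure.pi fun _ => ν)
          ∂(Measure.pi fun _ => ν) := integral_prod_symm _ hST
    _ ≤ ∫ b, ∫ a, ‖B a (T.piecewise b 0)‖ ∂(Measure.pi fun _ => ν) ∂(Measure.pi fun _ => ν) :=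
        integral_mono hST.integral_prod_right hT.integral_prod_right fun b =>
          integral_norm_piecewise_zero_le hν hmean (B.flip (T.piecewise b 0)) S
    _ = ∫ a, ∫ b, ‖B a (T.piecewise b 0)‖ ∂(Measure.pi fun _ => ν) ∂(Measure.pi fun _ => ν) :=
        (integral_integral_swap hT).symm
    _ ≤ ∫ a, ∫ b, ‖B a b‖ ∂(Measure.pi fun _ => ν) ∂(Measure.pi fun _ => ν) :=
        integral_mono hT.integral_prod_left hB.integral_prod_left fun a =>
          integral_norm_piecewise_zero_le hν hmean (B a) T
    _ = _ := (integral_prod _ hB).symm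

theorem integral_norm_piecewise_zero_piecewise_compl_zero_le (hν : ∀ᵐ t ∂ν, |t| ≤ C)
    (hmean : ∫ t, t ∂ν = 0) (B : (ι → ℝ) →L[ℝ] (ι → ℝ) →L[ℝ] F) (S : Finset ι) :
    ∫ a, ‖B (S.piecewise a 0) (Sᶜ.piecewise a 0)‖ ∂(Measure.pi fun _ => ν)
      ≤ ∫ p, ‖B p.1 p.2‖ ∂(Measure.pi fun _ => ν).prod (Measure.pi fun _ => ν) :=
  calc _ = ∫ p, ‖B (S.piecewise p.1 0) (Sᶜ.piecewise p.2 0)‖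
          ∂(Measure.pi fun _ => ν).prod (Measure.pi fun _ => ν) := by
        rw [← (measurePreserving_piecewise _ S).integral_comp_of_aestronglyMeasurable
          (by fun_prop : Continuous _).aestronglyMeasurable]
        simp [piecewise_compl]
    _ ≤ _ := integral_norm_piecewise_zero_piecewise_zero_le hν hmean B S Sᶜ

end BoundedLaw

def chaos {ι E : Type*} [Fintype ι] [NormedAddCommGroup E] [NormedSpace ℝ E]
    (x : ι → ι → E) : (ι → ℝ) →L[ℝ] (ι → ℝ) →L[ℝ] E :=
  ∑ i, ∑ j, (ContinuousLinearMap.proj i).smulRight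
    ((ContinuousLinearMap.proj j).smulRight (x i j))

section Chaos

variable {ι E : Type*} [Fintype ι] [NormedAddCommGroup E] [NormedSpace ℝ E]

@[simp]
theorem chaos_apply (x : ι → ι → E) (u v : ι → ℝ) :
    chaos x u v = ∑ i, ∑ j, (u i * v j) • x i j := by
  simp [chaos, mul_smul]

theorem map_chaos {G : Type*} [NormedAddCommGroup G] [NormedSpace ℝ G] (L : E →L[ℝ] G)
    (x : ι → ι → E) (u v : ι → ℝ) : L (chaos x u v) = chaos (fun i j => L (x i j)) u v := by
  simp

theorem card_filter_mem_and_notMem [DecidableEq ι] {i j : ι} (hij : i ≠ j) :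
    #{S : Finset ι | i ∈ S ∧ j ∉ S} = 2 ^ (Fintype.card ι - 2) := by
  have himage : ({S : Finset ι | i ∈ S ∧ j ∉ S} : Finset _) =
      ((univ.erase i).erase j).powerset.image (insert i) := by
    ext S
    simp only [mem_filter, mem_univ, true_and, mem_image, mem_powerset]
    constructor
    · rintro ⟨hi, hj⟩
      refine ⟨S.erase i, fun k hk => ?_, insert_erase hi⟩
      simp only [mem_erase] at hk ⊢
      exact ⟨fun hkj => hj (hkj ▸ hk.2), hk.1, mem_univ k⟩
    · rintro ⟨T, hT, rfl⟩
      refine ⟨mem_insert_self i T, fun hj => ?_⟩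
      rcases mem_insert.1 hj with h | h
      · exact hij h.symm
      · simpa using hT h
  rw [himage, card_image_of_injOn, card_powerset, card_erase_of_mem, card_erase_of_mem,
    card_univ]
  · rfl
  · exact mem_univ i
  · exact mem_erase.2 ⟨hij.symm, mem_univ j⟩
  · have hi : ∀ T ∈ ((univ.erase i).erase j).powerset, i ∉ T := fun T hT hiT => by
      simpa using mem_powerset.1 hT hiT
    intro T hT U hU hTU
    rw [← erase_insert (hi T hT), ← erase_insert (hi U hU)]
    exact congrArg (·.erase i) hTU

theorem sum_chaos_piecewise_compl [DecidableEq ι] {y : ι → ι → E} (hy : ∀ i, y i i = 0)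
    (a : ι → ℝ) :
    ∑ S : Finset ι, chaos y (S.piecewise a 0) (Sᶜ.piecewise a 0)
      = (2 : ℝ) ^ (Fintype.card ι - 2) • chaos y a a := by
  simp only [chaos_apply, smul_sum]
  rw [sum_comm]
  refine sum_congr rfl fun i _ => ?_
  rw [sum_comm]
  refine sum_congr rfl fun j _ => ?_
  rcases eq_or_ne i j with rfl | hij
  · simp [hy]
  have hterm (S : Finset ι) : (S.piecewise a 0 i * Sᶜ.piecewise a 0 j) • y i j
      = if i ∈ S ∧ j ∉ S then (a i * a j) • y i j else 0 := by
    by_cases hi : i ∈ S <;> by_cases hj : j ∈ S <;> simp [hi, hj]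
  simp_rw [hterm]
  rw [← sum_filter, sum_const, card_filter_mem_and_notMem hij, ← Nat.cast_smul_eq_nsmul ℝ]
  push_cast
  rfl

end Chaos

section Decoupling

variable {ι : Type*} [Fintype ι] [DecidableEq ι] {ν : Measure ℝ} [IsProbabilityMeasure ν] {C : ℝ}

theorem integral_norm_chaos_le_four_mul {F : Type*} [NormedAddCommGroup F] [NormedSpace ℝ F]
    [CompleteSpace F] (hν : ∀ᵐ t ∂ν, |t| ≤ C) (hmean : ∫ t, t ∂ν = 0)
    {y : ι → ι → F} (hy : ∀ i, y i i = 0) :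
    ∫ a, ‖chaos y a a‖ ∂(Measure.pi fun _ => ν)
      ≤ 4 * ∫ p, ‖chaos y p.1 p.2‖ ∂(Measure.pi fun _ => ν).prod (Measure.pi fun _ => ν) := by
  set R := ∫ p, ‖chaos y p.1 p.2‖ ∂(Measure.pi fun _ => ν).prod (Measure.pi fun _ => ν)
  have hint (S : Finset ι) : Integrable (fun a => ‖chaos y (S.piecewise a 0) (Sᶜ.piecewise a 0)‖)
      (Measure.pi fun _ => ν) := integrable_pi_of_continuous hν (by fun_prop)
  have hsum : (2 : ℝ) ^ (Fintype.card ι - 2) * ∫ a, ‖chaos y a a‖ ∂(Measure.pi fun _ => ν)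
      ≤ 2 ^ Fintype.card ι * R :=
    calc _ = ∫ a, ‖∑ S : Finset ι, chaos y (S.piecewise a 0) (Sᶜ.piecewise a 0)‖
            ∂(Measure.pi fun _ => ν) := by
          simp_rw [sum_chaos_piecewise_compl hy, norm_smul, integral_const_mul]
          simp
      _ ≤ ∫ a, ∑ S : Finset ι, ‖chaos y (S.piecewise a 0) (Sᶜ.piecewise a 0)‖
            ∂(Measure.pi fun _ => ν) :=
          integral_mono (integrable_pi_of_continuous hν (by fun_prop))
            (integrable_finsetSum _ fun S _ => hint S) fun a => norm_sum_le _ _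
      _ = ∑ S : Finset ι, ∫ a, ‖chaos y (S.piecewise a 0) (Sᶜ.piecewise a 0)‖
            ∂(Measure.pi fun _ => ν) := integral_finsetSum _ fun S _ => hint S
      _ ≤ ∑ _S : Finset ι, R :=
          sum_le_sum fun S _ => integral_norm_piecewise_zero_piecewise_compl_zero_le hν hmean _ S
      _ = 2 ^ Fintype.card ι * R := by simp
  have hpow : (2 : ℝ) ^ Fintype.card ι ≤ 2 ^ (Fintype.card ι - 2) * 4 := by
    rw [show (4 : ℝ) = 2 ^ 2 by norm_num, ← pow_add]
    exact pow_le_pow_right₀ one_le_two (by omega)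
  have hR : 0 ≤ R := integral_nonneg fun _ => norm_nonneg _
  refine le_of_mul_le_mul_left (hsum.trans ?_) (by positivity)
  exact (mul_le_mul_of_nonneg_right hpow hR).trans_eq (mul_assoc _ _ _)

theorem integral_norm_chaos_sub_mean_le {F : Type*} [NormedAddCommGroup F] [NormedSpace ℝ F]
    [CompleteSpace F] (hν : ∀ᵐ t ∂ν, |t| ≤ C) {y : ι → ι → F} (hy : ∀ i, y i i = 0) :
    ∫ a, ‖chaos y (a - fun _ => ∫ t, t ∂ν) (a - fun _ => ∫ t, t ∂ν)‖ ∂(Measure.pi fun _ => ν)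
      ≤ 4 * ∫ p, ‖chaos y (p.1 - fun _ => ∫ t, t ∂ν) (p.2 - fun _ => ∫ t, t ∂ν)‖
        ∂(Measure.pi fun _ => ν).prod (Measure.pi fun _ => ν) := by
  set m := ∫ t, t ∂ν
  have hshift : MeasurePreserving (· - m) ν (ν.map (· - m)) := ⟨by fun_prop, rfl⟩
  have := Measure.isProbabilityMeasure_map (μ := ν) hshift.measurable.aemeasurable
  have hvec : MeasurePreserving (fun a : ι → ℝ => a - fun _ => m) (Measure.pi fun _ => ν)
      (Measure.pi fun _ => ν.map (· - m)) := measurePreserving_pi _ _ fun _ => hshift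
  have hν' : ∀ᵐ t ∂ν.map (· - m), |t| ≤ C + |m| := by
    rw [ae_map_iff hshift.measurable.aemeasurable (measurableSet_le (by fun_prop) (by fun_prop))]
    exact hν.mono fun t ht => (abs_sub _ _).trans (by linarith)
  have hmean : ∫ t, t ∂ν.map (· - m) = 0 := by
    rw [integral_map (f := fun t => t) hshift.measurable.aemeasurable aestronglyMeasurable_id,
      integral_sub (f := fun t => t) (continuous_id.integrable_of_ae_mem isCompact_Icc
        (hν.mono fun _ => abs_le.1)) (integrable_const m), integral_const]
    simp [m]
  have hdiag := hvec.integral_comp_of_aestronglyMeasurable (g := fun a => ‖chaos y a a‖)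
    (by fun_prop : Continuous _).aestronglyMeasurable
  have hdec := (hvec.prod hvec).integral_comp_of_aestronglyMeasurable
    (g := fun p => ‖chaos y p.1 p.2‖) (by fun_prop : Continuous _).aestronglyMeasurable
  simp only [Prod.map_fst, Prod.map_snd] at hdec
  rw [hdiag, hdec]
  exact integral_norm_chaos_le_four_mul hν' hmean hy

theorem integral_norm_chaos_le_twenty_mul_of_completeSpace {F : Type*} [NormedAddCommGroup F]
    [NormedSpace ℝ F] [CompleteSpace F] (hν : ∀ᵐ t ∂ν, |t| ≤ C) {y : ι → ι → F}
    (hy : ∀ i, y i i = 0) :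
    ∫ a, ‖chaos y a a‖ ∂(Measure.pi fun _ => ν)
      ≤ 20 * ∫ p, ‖chaos y p.1 p.2‖ ∂(Measure.pi fun _ => ν).prod (Measure.pi fun _ => ν) := by
  have hdiag := integral_norm_apply_self_le hν (chaos y)
  have hcen := integral_norm_chaos_sub_mean_le hν hy
  have hdec := integral_norm_sub_mean_sub_mean_le hν (chaos y)
  have hR : 0 ≤ ∫ p, ‖chaos y p.1 p.2‖ ∂(Measure.pi fun _ => ν).prod (Measure.pi fun _ => ν) :=
    integral_nonneg fun _ => norm_nonneg _
  linarith

theorem integral_norm_chaos_le_twenty_mul {E : Type*} [NormedAddCommGroup E] [NormedSpace ℝ E]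
    (hν : ∀ᵐ t ∂ν, |t| ≤ C) {x : ι → ι → E} (hx : ∀ i, x i i = 0) :
    ∫ a, ‖chaos x a a‖ ∂(Measure.pi fun _ => ν)
      ≤ 20 * ∫ p, ‖chaos x p.1 p.2‖ ∂(Measure.pi fun _ => ν).prod (Measure.pi fun _ => ν) := by
  have hnorm (u v : ι → ℝ) :
      ‖chaos (fun i j => UniformSpace.Completion.toComplL (𝕜 := ℝ) (x i j)) u v‖ = ‖chaos x u v‖ := by
    rw [← map_chaos]
    exact UniformSpace.Completion.norm_coe _
  simpa only [hnorm] using integral_norm_chaos_le_twenty_mul_of_completeSpace hν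
    (y := fun i j => UniformSpace.Completion.toComplL (𝕜 := ℝ) (x i j)) (by simp [hx])

end Decoupling

theorem measurePreserving_pair_of_iIndepFun {Ω ι κ β : Type*} [MeasurableSpace Ω]
    [Fintype ι] [Fintype κ] [MeasurableSpace β] {P : Measure Ω} [IsProbabilityMeasure P]
    {ξ : ι → Ω → β} {ξ' : κ → Ω → β} {ν : Measure β} [SigmaFinite ν]
    (hξ : ∀ i, Measurable (ξ i)) (hξ' : ∀ j, Measurable (ξ' j))
    (hindep : iIndepFun (Sum.elim ξ ξ') P) (hlaw : ∀ s, P.map (Sum.elim ξ ξ' s) = ν) :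
    MeasurePreserving (fun ω => (fun i => ξ i ω, fun j => ξ' j ω)) P
      ((Measure.pi fun _ => ν).prod (Measure.pi fun _ => ν)) := by
  have hmeas (s : ι ⊕ κ) : Measurable (Sum.elim ξ ξ' s) := by cases s <;> simp [hξ, hξ']
  have hjoint : MeasurePreserving (fun ω s => Sum.elim ξ ξ' s ω) P (Measure.pi fun _ => ν) := by
    refine ⟨measurable_pi_lambda _ hmeas, ?_⟩
    rw [(iIndepFun_iff_map_fun_eq_pi_map fun s => (hmeas s).aemeasurable).1 hindep]
    simp_rw [hlaw]
  exact (measurePreserving_sumPiEquivProdPi fun _ => ν).comp hjoint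

/-- Decoupling lemma of Bourgain–Tzafriri: for bounded i.i.d. real random
variables `ξ₁,…,ξ_n`, an independent copy `ξ'₁,…,ξ'_n` of the sequence, and
vectors `x_{ij}` in a Banach space with zero diagonal,
`E‖∑_{i,j} ξ_i ξ_j x_{ij}‖ ≤ 20 E‖∑_{i,j} ξ_i ξ'_j x_{ij}‖`. -/
theorem decoupling {n : ℕ} (hn : 0 < n)
    (E : Type) [NormedAddCommGroup E] [NormedSpace ℝ E]
    (Ω : Type) [MeasureSpace Ω] [IsProbabilityMeasure (volume : Measure Ω)]
    (ξ ξ' : Fin n → Ω → ℝ)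
    (hmeas : ∀ i, Measurable (ξ i)) (hmeas' : ∀ i, Measurable (ξ' i))
    (hbdd : ∃ B : ℝ, ∀ i ω, |ξ i ω| ≤ B)
    (hindep : iIndepFun (Sum.elim ξ ξ' : Fin n ⊕ Fin n → Ω → ℝ))
    (hid : ∀ s : Fin n ⊕ Fin n,
      IdentDistrib (Sum.elim ξ ξ' s) (ξ ⟨0, hn⟩))
    (x : Fin n → Fin n → E) (hx : ∀ i, x i i = 0) :
    (∫ ω, ‖∑ i : Fin n, ∑ j : Fin n, (ξ i ω * ξ j ω) • x i j‖)
      ≤ 20 * ∫ ω, ‖∑ i : Fin n, ∑ j : Fin n, (ξ i ω * ξ' j ω) • x i j‖ := by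
  obtain ⟨C, hC⟩ := hbdd
  set ν := (volume : Measure Ω).map (ξ ⟨0, hn⟩)
  have := Measure.isProbabilityMeasure_map (μ := volume) (hmeas ⟨0, hn⟩).aemeasurable
  have hν : ∀ᵐ t ∂ν, |t| ≤ C :=
    (ae_map_iff (hmeas _).aemeasurable (measurableSet_le (by fun_prop) (by fun_prop))).2
      (ae_of_all _ (hC _))
  have hpair := measurePreserving_pair_of_iIndepFun hmeas hmeas' hindep fun s => (hid s).map_eq
  have hdiag := hpair.integral_comp_of_aestronglyMeasurable (g := fun p => ‖chaos x p.1 p.1‖)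
    (by fun_prop : Continuous _).aestronglyMeasurable
  have hdec := hpair.integral_comp_of_aestronglyMeasurable (g := fun p => ‖chaos x p.1 p.2‖)
    (by fun_prop : Continuous _).aestronglyMeasurable
  rw [integral_fun_fst (fun a => ‖chaos x a a‖)] at hdiag
  simp only [chaos_apply, probReal_univ, one_smul] at hdiag hdec
  rw [hdiag, hdec]
  simpa only [chaos_apply] using integral_norm_chaos_le_twenty_mul hν hx
end
end

section
/- Cut-norm decay theorem: Let A be an n×n real matrix and let Q ⊆ {1,…,n} be a random subset obtained by including each element independently with probability q/n. Then E‖A|_{Q×Q}‖_C ≤ C[ (q/n)² ‖A − D(A)‖_C + (q/n)‖D(A)‖_C + (q/n)^{3/2} (‖A‖_Col + ‖Aᵀ‖_Col) ], where C is an absolute constant. -/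
/-!
Write `B = A - D(A)` and `p = q / n`. The diagonal part contributes at most
`p ∑ |A i i| ≤ 2 p ‖D(A)‖_C`. Since `B` has zero diagonal, `B(S, T) = 4 𝔼_I B(S ∩ I, T \ I)`
over a uniformly random `I`; this decoupling replaces the block `Q × Q` by `Q₁ × Q₂` with
`Q₁, Q₂` independent. Masking rows by a random `Q` costs `2 p ‖M‖_C + 4 √p ‖M‖_Col` in
expectation; applied to rows and then (after transposing) to columns this yields the bound. For
the one-sided estimate, `sup_S M(S ∩ Q, T)` is the sum over `i ∈ Q` of the positive parts of the
row sums `r_i(T)`; their mean part is at most `p ‖M‖_C`, and the centred remainder is bounded by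
symmetrization, the contraction principle (which removes the positive part) and Khintchine's
inequality by `2 √p ‖M‖_Col`.
-/

open scoped Classical
noncomputable section

/-- Cut norm. -/
def cutNorm {m n : ℕ} (A : Matrix (Fin m) (Fin n) ℝ) : ℝ :=
  ⨆ p : Finset (Fin m) × Finset (Fin n), |∑ i ∈ p.1, ∑ j ∈ p.2, A i j|

/-- Sum of Euclidean lengths of the columns. -/
def colSum {m n : ℕ} (A : Matrix (Fin m) (Fin n) ℝ) : ℝ :=
  ∑ j, Real.sqrt (∑ i, (A i j) ^ 2)

/-- Restriction to a Q×Q block (entries outside set to 0); its cut norm equals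
that of the submatrix `(A_{ij})_{i,j∈Q}`. -/
def restrict {n : ℕ} (Q : Finset (Fin n)) (A : Matrix (Fin n) (Fin n) ℝ) :
    Matrix (Fin n) (Fin n) ℝ :=
  Matrix.of fun i j => if i ∈ Q ∧ j ∈ Q then A i j else 0

/-- Diagonal part of a square matrix. -/
def diagPart {n : ℕ} (A : Matrix (Fin n) (Fin n) ℝ) : Matrix (Fin n) (Fin n) ℝ :=
  Matrix.of fun i j => if i = j then A i j else 0

/-- Expectation over a random subset of `Fin n`, each element included
independently with probability `p`. -/
def ESub {n : ℕ} (p : ℝ) (f : Finset (Fin n) → ℝ) : ℝ :=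
  ∑ Q : Finset (Fin n), p ^ Q.card * (1 - p) ^ (n - Q.card) * f Q

open Finset
open scoped Matrix

lemma le_ciSup_of_finite {τ : Type*} [Finite τ] (f : τ → ℝ) (t : τ) : f t ≤ ⨆ t, f t :=
  le_ciSup (Finite.bddAbove_range f) t

section RandomSubset

variable {ι : Type*} {p : ℝ} {s : Finset ι}

/-- `subsetExp p s f` is the expectation of `f Q` for a random `Q ⊆ s` that contains each
element of `s` independently with probability `p`. -/
def subsetExp (p : ℝ) (s : Finset ι) (f : Finset ι → ℝ) : ℝ :=
  ∑ Q ∈ s.powerset, p ^ #Q * (1 - p) ^ (#s - #Q) * f Q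

lemma subsetExp_congr {f g : Finset ι → ℝ} (h : ∀ Q ⊆ s, f Q = g Q) :
    subsetExp p s f = subsetExp p s g :=
  sum_congr rfl fun Q hQ => by rw [h Q (mem_powerset.1 hQ)]

lemma subsetExp_add (f g : Finset ι → ℝ) :
    subsetExp p s (fun Q => f Q + g Q) = subsetExp p s f + subsetExp p s g := by
  simp only [subsetExp, mul_add, sum_add_distrib]

lemma subsetExp_neg (f : Finset ι → ℝ) :
    subsetExp p s (fun Q => -f Q) = -subsetExp p s f := by
  simp only [subsetExp, mul_neg, sum_neg_distrib]

lemma subsetExp_sub (f g : Finset ι → ℝ) :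
    subsetExp p s (fun Q => f Q - g Q) = subsetExp p s f - subsetExp p s g := by
  simp only [subsetExp, mul_sub, sum_sub_distrib]

lemma subsetExp_const_mul (c : ℝ) (f : Finset ι → ℝ) :
    subsetExp p s (fun Q => c * f Q) = c * subsetExp p s f := by
  simp only [subsetExp, mul_sum, mul_left_comm]

lemma subsetExp_sum {κ : Type*} (t : Finset κ) (F : κ → Finset ι → ℝ) :
    subsetExp p s (fun Q => ∑ k ∈ t, F k Q) = ∑ k ∈ t, subsetExp p s (F k) := by
  simp only [subsetExp, mul_sum]
  exact sum_comm

lemma subsetExp_const (c : ℝ) : subsetExp p s (fun _ => c) = c := by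
  rw [subsetExp, ← sum_mul, sum_pow_mul_eq_add_pow, add_sub_cancel, one_pow, one_mul]

lemma subsetExp_comm {κ : Type*} {p' : ℝ} {s' : Finset κ} (F : Finset ι → Finset κ → ℝ) :
    subsetExp p s (fun Q => subsetExp p' s' (F Q))
      = subsetExp p' s' (fun R => subsetExp p s (fun Q => F Q R)) := by
  simp only [subsetExp, mul_sum, mul_left_comm (p' ^ _ * _)]
  exact sum_comm

lemma subsetExp_half (f : Finset ι → ℝ) :
    subsetExp (1 / 2) s f = (∑ Q ∈ s.powerset, f Q) / 2 ^ #s := by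
  rw [subsetExp, sum_div]
  refine sum_congr rfl fun Q hQ => ?_
  rw [show (1 : ℝ) - 1 / 2 = 1 / 2 by norm_num, ← pow_add,
    Nat.add_sub_cancel' (card_le_card (mem_powerset.1 hQ)), one_div, inv_pow, inv_mul_eq_div]

lemma subsetExp_half_comp {e : Finset ι → Finset ι} (hmaps : ∀ Q ⊆ s, e Q ⊆ s)
    (hinv : ∀ Q ⊆ s, e (e Q) = Q) (f : Finset ι → ℝ) :
    subsetExp (1 / 2) s (fun Q => f (e Q)) = subsetExp (1 / 2) s f := by
  simp only [subsetExp_half, ← mem_powerset] at hmaps hinv ⊢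
  rw [sum_nbij' e e hmaps hmaps hinv hinv fun _ _ => rfl]

lemma half_mem_Icc : (1 / 2 : ℝ) ∈ Set.Icc (0 : ℝ) 1 := ⟨by norm_num, by norm_num⟩

section

variable (hp : p ∈ Set.Icc (0 : ℝ) 1)
include hp

lemma subsetExp_weight_nonneg (Q : Finset ι) : 0 ≤ p ^ #Q * (1 - p) ^ (#s - #Q) :=
  mul_nonneg (pow_nonneg hp.1 _) (pow_nonneg (sub_nonneg.2 hp.2) _)

lemma subsetExp_mono {f g : Finset ι → ℝ} (h : ∀ Q ⊆ s, f Q ≤ g Q) :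
    subsetExp p s f ≤ subsetExp p s g :=
  sum_le_sum fun Q hQ =>
    mul_le_mul_of_nonneg_left (h Q (mem_powerset.1 hQ)) (subsetExp_weight_nonneg hp Q)

lemma abs_subsetExp_le (f : Finset ι → ℝ) :
    |subsetExp p s f| ≤ subsetExp p s (fun Q => |f Q|) :=
  (abs_sum_le_sum_abs _ _).trans_eq <| sum_congr rfl fun Q _ => by
    rw [abs_mul, abs_of_nonneg (subsetExp_weight_nonneg hp Q)]

lemma subsetExp_sqrt_le {f : Finset ι → ℝ} (hf : ∀ Q ⊆ s, 0 ≤ f Q) :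
    subsetExp p s (fun Q => √(f Q)) ≤ √(subsetExp p s f) := by
  have hmass : ∑ Q ∈ s.powerset, p ^ #Q * (1 - p) ^ (#s - #Q) = 1 := by
    simpa [subsetExp] using subsetExp_const (p := p) (s := s) 1
  simpa [subsetExp] using Real.strictConcaveOn_sqrt.concaveOn.le_map_sum
    (fun Q _ => subsetExp_weight_nonneg hp Q) hmass
    (fun Q hQ => Set.mem_Ici.2 (hf Q (mem_powerset.1 hQ)))

end

variable [DecidableEq ι]

lemma subsetExp_insert {a : ι} (ha : a ∉ s) (f : Finset ι → ℝ) :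
    subsetExp p (insert a s) f
      = p * subsetExp p s (fun Q => f (insert a Q)) + (1 - p) * subsetExp p s f := by
  simp only [subsetExp, sum_powerset_insert ha, mul_sum, card_insert_of_notMem ha]
  rw [add_comm]
  congr 1 <;> refine sum_congr rfl fun Q hQ => ?_
  · have hQs : #Q ≤ #s := card_le_card (mem_powerset.1 hQ)
    rw [card_insert_of_notMem fun h => ha (mem_powerset.1 hQ h),
      show #s + 1 - (#Q + 1) = #s - #Q by omega]
    ring
  · have hQs : #Q ≤ #s := card_le_card (mem_powerset.1 hQ)
    rw [show #s + 1 - #Q = #s - #Q + 1 by omega]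
    ring

lemma subsetExp_sum_mem (c : ι → ℝ) :
    subsetExp p s (fun Q => ∑ i ∈ Q, c i) = p * ∑ i ∈ s, c i := by
  induction s using Finset.induction with
  | empty => simp [subsetExp]
  | insert a s ha ih =>
    rw [subsetExp_insert ha, ih, sum_insert ha,
      subsetExp_congr fun Q hQ => sum_insert fun h => ha (hQ h), subsetExp_add, subsetExp_const, ih]
    ring

lemma disjoint_inter_sdiff (A B g : Finset ι) : Disjoint (A ∩ g) (B \ g) :=
  disjoint_of_subset_left inter_subset_right disjoint_sdiff

/-- Exchanging the parts inside `g` of two independent random subsets preserves their joint law. -/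
lemma subsetExp_subsetExp_swap (g : Finset ι) (F : Finset ι → Finset ι → ℝ) :
    subsetExp p s (fun Q => subsetExp p s (F Q))
      = subsetExp p s (fun Q => subsetExp p s fun R => F (Q ∩ g ∪ R \ g) (R ∩ g ∪ Q \ g)) := by
  set e : Finset ι × Finset ι → Finset ι × Finset ι :=
    fun x => (x.1 ∩ g ∪ x.2 \ g, x.2 ∩ g ∪ x.1 \ g)
  set W : Finset ι × Finset ι → ℝ := fun x =>
    p ^ (#x.1 + #x.2) * (1 - p) ^ ((#s - #x.1) + (#s - #x.2))
  have he : ∀ x, e (e x) = x := fun x => by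
    ext y <;> by_cases y ∈ g <;> simp_all [e]
  have hmem : ∀ x ∈ s.powerset ×ˢ s.powerset, e x ∈ s.powerset ×ˢ s.powerset := by
    simp only [mem_product, mem_powerset]
    exact fun x hx => ⟨union_subset (inter_subset_left.trans hx.1) (sdiff_subset.trans hx.2),
      union_subset (inter_subset_left.trans hx.2) (sdiff_subset.trans hx.1)⟩
  have hW : ∀ x ∈ s.powerset ×ˢ s.powerset, W (e x) = W x := fun x hx => by
    have card_e : ∀ A B : Finset ι, #(A ∩ g ∪ B \ g) = #(A ∩ g) + #(B \ g) := fun A B =>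
      card_union_of_disjoint (disjoint_inter_sdiff A B g)
    have h₁ := card_inter_add_card_sdiff x.1 g
    have h₂ := card_inter_add_card_sdiff x.2 g
    have h₃ := card_e x.1 x.2
    have h₄ := card_e x.2 x.1
    have hex := hmem x hx
    simp only [mem_product, mem_powerset] at hx hex
    have := card_le_card hx.1; have := card_le_card hx.2
    have hc₁ := card_le_card hex.1; have hc₂ := card_le_card hex.2
    dsimp only [W, e] at hc₁ hc₂ ⊢
    congr 2 <;> omega
  have hsum : ∀ G : Finset ι → Finset ι → ℝ, subsetExp p s (fun Q => subsetExp p s (G Q))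
      = ∑ x ∈ s.powerset ×ˢ s.powerset, W x * G x.1 x.2 := fun G => by
    rw [sum_product]
    simp only [subsetExp, mul_sum, W, pow_add]
    exact sum_congr rfl fun _ _ => sum_congr rfl fun _ _ => by ring
  rw [hsum, hsum]
  exact sum_nbij' e e hmem hmem (fun x _ => he x) (fun x _ => he x) fun x hx => by
    rw [hW x hx]
    exact congrArg (W x * ·) (congrArg (fun y => F y.1 y.2) (he x).symm)

lemma subsetExp_inter_sdiff_le (hp : p ∈ Set.Icc (0 : ℝ) 1) {F : Finset ι → Finset ι → ℝ}
    (hF : ∀ ⦃Q Q' R R'⦄, Q ⊆ Q' → R ⊆ R' → F Q R ≤ F Q' R') (I : Finset ι) :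
    subsetExp p s (fun Q => F (Q ∩ I) (Q \ I)) ≤ subsetExp p s (fun Q => subsetExp p s (F Q)) := by
  have hI : ∀ Q R : Finset ι, (Q ∩ I ∪ R \ I) ∩ I = Q ∩ I ∧ (R ∩ I ∪ Q \ I) \ I = Q \ I :=
    fun Q R => ⟨by ext; simp; tauto, by ext; simp; tauto⟩
  calc subsetExp p s (fun Q => F (Q ∩ I) (Q \ I))
      = subsetExp p s (fun Q => subsetExp p s fun R => F (Q ∩ I) (R \ I)) := by
        simp only [subsetExp_subsetExp_swap I (fun Q R => F (Q ∩ I) (R \ I)), hI, subsetExp_const]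
    _ ≤ _ := subsetExp_mono hp fun Q _ => subsetExp_mono hp fun R _ =>
        hF inter_subset_left sdiff_subset

end RandomSubset

section Rademacher

variable {ι : Type*} [DecidableEq ι] {s : Finset ι}

lemma subsetExp_half_eq_zero_of_flip {f : Finset ι → ℝ} {j : ι} (hj : j ∈ s)
    (hf : ∀ g ⊆ s, f (symmDiff g {j}) = -f g) : subsetExp (1 / 2) s f = 0 := by
  have h := subsetExp_half_comp (e := fun g => symmDiff g {j})
    (fun g hg => symmDiff_le_sup.trans (union_subset hg (singleton_subset_iff.2 hj)))
    (fun g _ => symmDiff_symmDiff_cancel_right _ _) f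
  rw [subsetExp_congr hf, subsetExp_neg] at h
  linarith

/-- Under `subsetExp (1 / 2) s`, the signs `subsetSign g i` with `i ∈ s` are independent
Rademacher variables. -/
def subsetSign (g : Finset ι) (i : ι) : ℝ := if i ∈ g then 1 else -1

lemma subsetSign_symmDiff (g : Finset ι) (i j : ι) :
    subsetSign (symmDiff g {j}) i = if i = j then -subsetSign g i else subsetSign g i := by
  by_cases hij : i = j
  · subst hij; by_cases hi : i ∈ g <;> simp [subsetSign, mem_symmDiff, hi]
  · simp [subsetSign, mem_symmDiff, hij]

lemma subsetSign_sdiff (g : Finset ι) {i : ι} (hi : i ∈ s) :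
    subsetSign (s \ g) i = -subsetSign g i := by
  by_cases h : i ∈ g <;> simp [subsetSign, hi, h]

lemma sum_subsetSign_mul (g Q : Finset ι) (x : ι → ℝ) :
    ∑ i ∈ Q, subsetSign g i * x i = ∑ i ∈ Q ∩ g, x i - ∑ i ∈ Q \ g, x i := by
  simp only [subsetSign, ite_mul, one_mul, neg_one_mul, sum_ite, sum_neg_distrib,
    filter_mem_eq_inter, ← sdiff_eq_filter, sub_eq_add_neg]

lemma sum_inter_union_sdiff_sub_eq {g Q R : Finset ι} (hR : R ⊆ s) (x : ι → ℝ) :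
    ∑ i ∈ Q ∩ g ∪ R \ g, x i - ∑ i ∈ R ∩ g ∪ Q \ g, x i
      = ∑ i ∈ Q, subsetSign g i * x i + ∑ i ∈ R, subsetSign (s \ g) i * x i := by
  have hR' : ∑ i ∈ R, subsetSign (s \ g) i * x i = -∑ i ∈ R, subsetSign g i * x i := by
    rw [← sum_neg_distrib]
    exact sum_congr rfl fun i hi => by rw [subsetSign_sdiff g (hR hi), neg_mul]
  rw [hR', sum_union (disjoint_inter_sdiff _ _ g), sum_union (disjoint_inter_sdiff _ _ g),
    sum_subsetSign_mul g Q, sum_subsetSign_mul g R]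
  ring

lemma subsetExp_half_sign_mul_sign (i : ι) {j : ι} (hj : j ∈ s) :
    subsetExp (1 / 2) s (fun g => subsetSign g i * subsetSign g j) = if i = j then 1 else 0 := by
  split_ifs with hij
  · subst hij
    rw [subsetExp_congr fun g _ => show subsetSign g i * subsetSign g i = 1 by
      unfold subsetSign; split_ifs <;> norm_num, subsetExp_const]
  · refine subsetExp_half_eq_zero_of_flip hj fun g _ => ?_
    simp only [subsetSign_symmDiff, if_neg hij, if_true, mul_neg]

lemma subsetExp_half_sign {i : ι} (hi : i ∈ s) :
    subsetExp (1 / 2) s (fun g => subsetSign g i) = 0 :=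
  subsetExp_half_eq_zero_of_flip hi fun g _ => by simp only [subsetSign_symmDiff, if_true]

lemma subsetExp_half_mem_and_not_mem {i j : ι} (hi : i ∈ s) (hj : j ∈ s) :
    subsetExp (1 / 2) s (fun g => if i ∈ g ∧ j ∉ g then 1 else 0) = if i = j then 0 else 1 / 4 := by
  have hind : ∀ g : Finset ι, (if i ∈ g ∧ j ∉ g then (1 : ℝ) else 0)
      = 4⁻¹ * (1 + subsetSign g i - subsetSign g j - subsetSign g i * subsetSign g j) := fun g => by
    unfold subsetSign; split_ifs <;> norm_num <;> simp_all
  rw [subsetExp_congr fun g _ => hind g, subsetExp_const_mul, subsetExp_sub, subsetExp_sub,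
    subsetExp_add, subsetExp_const, subsetExp_half_sign hi, subsetExp_half_sign hj,
    subsetExp_half_sign_mul_sign i hj]
  split_ifs <;> norm_num

lemma subsetExp_half_sq_sum_sign (a : ι → ℝ) :
    subsetExp (1 / 2) s (fun g => (∑ i ∈ s, subsetSign g i * a i) ^ 2) = ∑ i ∈ s, a i ^ 2 := by
  calc subsetExp (1 / 2) s (fun g => (∑ i ∈ s, subsetSign g i * a i) ^ 2)
      = subsetExp (1 / 2) s (fun g => ∑ i ∈ s, ∑ j ∈ s,
          a i * a j * (subsetSign g i * subsetSign g j)) :=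
        subsetExp_congr fun g _ => by
          rw [sq, sum_mul_sum]
          exact sum_congr rfl fun i _ => sum_congr rfl fun j _ => by ring
    _ = ∑ i ∈ s, ∑ j ∈ s, a i * a j * (if i = j then 1 else 0) := by
        simp only [subsetExp_sum, subsetExp_const_mul]
        exact sum_congr rfl fun i _ => sum_congr rfl fun j hj => by
          rw [subsetExp_half_sign_mul_sign i hj]
    _ = ∑ i ∈ s, a i ^ 2 := by simp [sq]

lemma subsetExp_half_abs_sum_sign_le (a : ι → ℝ) :
    subsetExp (1 / 2) s (fun g => |∑ i ∈ s, subsetSign g i * a i|) ≤ √(∑ i ∈ s, a i ^ 2) := by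
  rw [← subsetExp_half_sq_sum_sign]
  simpa only [Real.sqrt_sq_eq_abs] using
    subsetExp_sqrt_le half_mem_Icc fun g _ => sq_nonneg _

end Rademacher

section Contraction

variable {τ ι : Type*} [DecidableEq ι]

lemma subsetExp_half_insert_sup_sum_sign {a : ι} {s : Finset ι} (ha : a ∉ s)
    (c : τ → ℝ) (x : τ → ι → ℝ) :
    subsetExp (1 / 2) (insert a s) (fun g => ⨆ t, c t + ∑ i ∈ insert a s, subsetSign g i * x t i)
      = 1 / 2 * (subsetExp (1 / 2) s (fun g => ⨆ t, c t + x t a + ∑ i ∈ s, subsetSign g i * x t i)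
        + subsetExp (1 / 2) s (fun g => ⨆ t, c t - x t a + ∑ i ∈ s, subsetSign g i * x t i)) := by
  have hsign : ∀ g ⊆ s, ∀ i ∈ s, subsetSign (insert a g) i = subsetSign g i := fun g _ i hi => by
    simp [subsetSign, ne_of_mem_of_not_mem hi ha]
  rw [subsetExp_insert ha, show (1 : ℝ) - 1 / 2 = 1 / 2 by norm_num, ← mul_add]
  congr 2 <;> refine subsetExp_congr fun g hg => iSup_congr fun t => ?_
  · rw [sum_insert ha, sum_congr rfl fun i hi => by rw [hsign g hg i hi]]
    simp [subsetSign, add_assoc]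
  · have hag : a ∉ g := fun h => ha (hg h)
    rw [sum_insert ha]
    simp [subsetSign, hag, add_assoc, sub_eq_add_neg]

variable [Finite τ] [Nonempty τ]

lemma ciSup_add_ciSup_sub_le {φ : ℝ → ℝ} (hφ : LipschitzWith 1 φ) (c u β : τ → ℝ) :
    (⨆ t, c t + φ (u t) + β t) + (⨆ t, c t - φ (u t) + β t)
      ≤ (⨆ t, c t + u t + β t) + ⨆ t, c t - u t + β t := by
  obtain ⟨t₁, h₁⟩ := exists_eq_ciSup_of_finite (f := fun t => c t + φ (u t) + β t)
  obtain ⟨t₂, h₂⟩ := exists_eq_ciSup_of_finite (f := fun t => c t - φ (u t) + β t)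
  rw [← h₁, ← h₂]
  have hlip : φ (u t₁) - φ (u t₂) ≤ |u t₁ - u t₂| :=
    (le_abs_self _).trans (by simpa [Real.dist_eq] using hφ.dist_le_mul (u t₁) (u t₂))
  rcases le_total (u t₂) (u t₁) with h | h
  · have := le_ciSup_of_finite (fun t => c t + u t + β t) t₁
    have := le_ciSup_of_finite (fun t => c t - u t + β t) t₂
    rw [abs_of_nonneg (sub_nonneg.2 h)] at hlip
    linarith
  · have := le_ciSup_of_finite (fun t => c t + u t + β t) t₂
    have := le_ciSup_of_finite (fun t => c t - u t + β t) t₁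
    rw [abs_of_nonpos (sub_nonpos.2 h)] at hlip
    linarith

lemma rademacher_contraction {φ : ℝ → ℝ} (hφ : LipschitzWith 1 φ) (s : Finset ι)
    (c : τ → ℝ) (v : τ → ι → ℝ) :
    subsetExp (1 / 2) s (fun g => ⨆ t, c t + ∑ i ∈ s, subsetSign g i * φ (v t i))
      ≤ subsetExp (1 / 2) s (fun g => ⨆ t, c t + ∑ i ∈ s, subsetSign g i * v t i) := by
  induction s using Finset.induction generalizing c with
  | empty => simp
  | insert a s ha ih =>
    rw [subsetExp_half_insert_sup_sum_sign ha c (fun t i => φ (v t i)),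
      subsetExp_half_insert_sup_sum_sign ha c v]
    gcongr 1 / 2 * ?_
    calc _ ≤ subsetExp (1 / 2) s (fun g => ⨆ t, c t + φ (v t a) + ∑ i ∈ s, subsetSign g i * v t i)
          + subsetExp (1 / 2) s (fun g => ⨆ t, c t - φ (v t a) + ∑ i ∈ s, subsetSign g i * v t i) :=
          add_le_add (ih _) (ih _)
      _ ≤ _ := by
          rw [← subsetExp_add, ← subsetExp_add]
          exact subsetExp_mono half_mem_Icc fun g _ => ciSup_add_ciSup_sub_le hφ _ _ _

end Contraction

section Symmetrization

variable {ι τ : Type*} [DecidableEq ι] [Finite τ] [Nonempty τ] {p : ℝ} {s : Finset ι}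

lemma subsetExp_sup_centered_le (hp : p ∈ Set.Icc (0 : ℝ) 1) (h : ι → τ → ℝ) :
    subsetExp p s (fun Q => ⨆ t, ∑ i ∈ Q, h i t - p * ∑ i ∈ s, h i t)
      ≤ subsetExp p s (fun Q => subsetExp p s fun R => ⨆ t, ∑ i ∈ Q, h i t - ∑ i ∈ R, h i t) :=
  subsetExp_mono hp fun Q _ => ciSup_le fun t => by
    calc ∑ i ∈ Q, h i t - p * ∑ i ∈ s, h i t
        = subsetExp p s (fun R => ∑ i ∈ Q, h i t - ∑ i ∈ R, h i t) := by
          rw [subsetExp_sub, subsetExp_const, subsetExp_sum_mem]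
      _ ≤ _ := subsetExp_mono hp fun R _ =>
          le_ciSup_of_finite (fun t => ∑ i ∈ Q, h i t - ∑ i ∈ R, h i t) t

lemma subsetExp_sup_sub_le_rademacher (hp : p ∈ Set.Icc (0 : ℝ) 1) (h : ι → τ → ℝ) :
    subsetExp p s (fun Q => subsetExp p s fun R => ⨆ t, ∑ i ∈ Q, h i t - ∑ i ∈ R, h i t)
      ≤ 2 * subsetExp p s (fun Q =>
          subsetExp (1 / 2) s fun g => ⨆ t, ∑ i ∈ Q, subsetSign g i * h i t) := by
  set G : Finset ι → Finset ι → ℝ := fun g Q => ⨆ t, ∑ i ∈ Q, subsetSign g i * h i t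
  have hsigned : ∀ g ⊆ s,
      subsetExp p s (fun Q => subsetExp p s fun R => ⨆ t, ∑ i ∈ Q, h i t - ∑ i ∈ R, h i t)
        ≤ subsetExp p s (G g) + subsetExp p s (G (s \ g)) := fun g _ => by
    rw [subsetExp_subsetExp_swap g, ← subsetExp_const (p := p) (s := s) (subsetExp p s (G (s \ g))),
      ← subsetExp_add]
    refine subsetExp_mono hp fun Q _ => ?_
    rw [← subsetExp_const (p := p) (s := s) (G g Q), ← subsetExp_add]
    refine subsetExp_mono hp fun R hR => ciSup_le fun t => ?_
    rw [sum_inter_union_sdiff_sub_eq hR]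
    exact add_le_add (le_ciSup_of_finite (fun t => ∑ i ∈ Q, subsetSign g i * h i t) t)
      (le_ciSup_of_finite (fun t => ∑ i ∈ R, subsetSign (s \ g) i * h i t) t)
  calc _ ≤ subsetExp (1 / 2) s (fun g => subsetExp p s (G g) + subsetExp p s (G (s \ g))) := by
        rw [← subsetExp_const (p := 1 / 2) (s := s) (subsetExp p s _)]
        exact subsetExp_mono half_mem_Icc hsigned
    _ = 2 * subsetExp (1 / 2) s (fun g => subsetExp p s (G g)) := by
        rw [subsetExp_add, subsetExp_half_comp (fun _ _ => sdiff_subset)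
          (fun _ hg => Finset.sdiff_sdiff_eq_self hg) (fun g => subsetExp p s (G g))]
        ring
    _ = _ := by rw [subsetExp_comm]

end Symmetrization

section CutNorm

variable {m n : ℕ}

def blockSum (M : Matrix (Fin m) (Fin n) ℝ) (S : Finset (Fin m)) (T : Finset (Fin n)) : ℝ :=
  ∑ i ∈ S, ∑ j ∈ T, M i j

lemma abs_blockSum_le_cutNorm (M : Matrix (Fin m) (Fin n) ℝ) (S : Finset (Fin m))
    (T : Finset (Fin n)) : |blockSum M S T| ≤ cutNorm M :=
  le_ciSup_of_finite (fun x : Finset (Fin m) × Finset (Fin n) => |blockSum M x.1 x.2|) (S, T)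

lemma cutNorm_le {M : Matrix (Fin m) (Fin n) ℝ} {a : ℝ} (h : ∀ S T, |blockSum M S T| ≤ a) :
    cutNorm M ≤ a :=
  ciSup_le fun x => h x.1 x.2

lemma cutNorm_nonneg (M : Matrix (Fin m) (Fin n) ℝ) : 0 ≤ cutNorm M :=
  (abs_nonneg _).trans (abs_blockSum_le_cutNorm M ∅ ∅)

lemma cutNorm_neg (M : Matrix (Fin m) (Fin n) ℝ) : cutNorm (-M) = cutNorm M := by
  simp [cutNorm, sum_neg_distrib]

lemma blockSum_neg (M : Matrix (Fin m) (Fin n) ℝ) (S : Finset (Fin m)) (T : Finset (Fin n)) :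
    blockSum (-M) S T = -blockSum M S T := by
  simp [blockSum, sum_neg_distrib]

lemma blockSum_transpose (M : Matrix (Fin m) (Fin n) ℝ) (S : Finset (Fin n))
    (T : Finset (Fin m)) : blockSum Mᵀ S T = blockSum M T S :=
  sum_comm

lemma cutNorm_transpose (M : Matrix (Fin m) (Fin n) ℝ) : cutNorm Mᵀ = cutNorm M := by
  refine le_antisymm (cutNorm_le fun S T => ?_) (cutNorm_le fun S T => ?_)
  · rw [blockSum_transpose]
    exact abs_blockSum_le_cutNorm M T S
  · rw [← blockSum_transpose]
    exact abs_blockSum_le_cutNorm Mᵀ T S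

lemma cutNorm_add_le (M N : Matrix (Fin m) (Fin n) ℝ) : cutNorm (M + N) ≤ cutNorm M + cutNorm N :=
  cutNorm_le fun S T => by
    simp only [blockSum, Matrix.add_apply, sum_add_distrib]
    exact (abs_add_le _ _).trans (add_le_add (abs_blockSum_le_cutNorm M S T)
      (abs_blockSum_le_cutNorm N S T))

lemma colSum_nonneg (M : Matrix (Fin m) (Fin n) ℝ) : 0 ≤ colSum M :=
  sum_nonneg fun _ _ => Real.sqrt_nonneg _

lemma colSum_neg (M : Matrix (Fin m) (Fin n) ℝ) : colSum (-M) = colSum M := by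
  simp [colSum]

lemma colSum_le_colSum {M N : Matrix (Fin m) (Fin n) ℝ} (h : ∀ i j, |M i j| ≤ |N i j|) :
    colSum M ≤ colSum N :=
  sum_le_sum fun j _ => Real.sqrt_le_sqrt <| sum_le_sum fun i _ => sq_le_sq.2 (h i j)

def maskRows (Q : Finset (Fin m)) (M : Matrix (Fin m) (Fin n) ℝ) : Matrix (Fin m) (Fin n) ℝ :=
  Matrix.of fun i j => if i ∈ Q then M i j else 0

def maskCols (Q : Finset (Fin n)) (M : Matrix (Fin m) (Fin n) ℝ) : Matrix (Fin m) (Fin n) ℝ :=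
  Matrix.of fun i j => if j ∈ Q then M i j else 0

lemma blockSum_maskRows (Q S : Finset (Fin m)) (M : Matrix (Fin m) (Fin n) ℝ) (T : Finset (Fin n)) :
    blockSum (maskRows Q M) S T = blockSum M (S ∩ Q) T := by
  simp only [blockSum, maskRows, Matrix.of_apply, ← sum_ite_mem S Q]
  exact sum_congr rfl fun i _ => by split_ifs <;> simp

lemma blockSum_maskCols (Q T : Finset (Fin n)) (M : Matrix (Fin m) (Fin n) ℝ) (S : Finset (Fin m)) :
    blockSum (maskCols Q M) S T = blockSum M S (T ∩ Q) := by
  simp only [blockSum, maskCols, Matrix.of_apply, sum_ite_mem]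

lemma maskRows_transpose (Q : Finset (Fin n)) (M : Matrix (Fin m) (Fin n) ℝ) :
    maskRows Q Mᵀ = (maskCols Q M)ᵀ :=
  rfl

lemma restrict_eq_maskRows_maskCols (Q : Finset (Fin n)) (A : Matrix (Fin n) (Fin n) ℝ) :
    _root_.restrict Q A = maskRows Q (maskCols Q A) := by
  ext i j
  simp [_root_.restrict, maskRows, maskCols, ite_and]

lemma cutNorm_maskRows_maskCols_mono (M : Matrix (Fin m) (Fin n) ℝ) {Q Q' : Finset (Fin m)}
    {R R' : Finset (Fin n)} (hQ : Q ⊆ Q') (hR : R ⊆ R') :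
    cutNorm (maskRows Q (maskCols R M)) ≤ cutNorm (maskRows Q' (maskCols R' M)) :=
  cutNorm_le fun S T => by
    have h := abs_blockSum_le_cutNorm (maskRows Q' (maskCols R' M)) (S ∩ Q) (T ∩ R)
    rw [blockSum_maskRows, blockSum_maskCols, inter_eq_left.2 (inter_subset_right.trans hQ),
      inter_eq_left.2 (inter_subset_right.trans hR)] at h
    rwa [blockSum_maskRows, blockSum_maskCols]

lemma colSum_maskRows (Q : Finset (Fin m)) (M : Matrix (Fin m) (Fin n) ℝ) :
    colSum (maskRows Q M) = ∑ j, √(∑ i ∈ Q, M i j ^ 2) := by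
  simp only [colSum, maskRows, Matrix.of_apply, ite_pow, zero_pow two_ne_zero, sum_ite_mem,
    univ_inter]

lemma colSum_maskCols (Q : Finset (Fin n)) (M : Matrix (Fin m) (Fin n) ℝ) :
    colSum (maskCols Q M) = ∑ j ∈ Q, √(∑ i, M i j ^ 2) := by
  simp only [colSum, maskCols, Matrix.of_apply, ite_pow, zero_pow two_ne_zero, sum_ite_irrel,
    sum_const_zero, Real.sqrt_zero, apply_ite Real.sqrt, sum_ite_mem, univ_inter]

end CutNorm

section OneSided

variable {m n : ℕ} {p : ℝ}

lemma sum_le_sum_max_zero {ι : Type*} {A Q : Finset ι} (hA : A ⊆ Q) (x : ι → ℝ) :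
    ∑ i ∈ A, x i ≤ ∑ i ∈ Q, max (x i) 0 :=
  (sum_le_sum fun _ _ => le_max_left _ _).trans <|
    sum_le_sum_of_subset_of_nonneg hA fun _ _ _ => le_max_right _ _

lemma sum_max_zero_le_cutNorm (M : Matrix (Fin m) (Fin n) ℝ) (T : Finset (Fin n)) :
    ∑ i, max (∑ j ∈ T, M i j) 0 ≤ cutNorm M := by
  have h : ∑ i, max (∑ j ∈ T, M i j) 0 = blockSum M {i | 0 ≤ ∑ j ∈ T, M i j} T := by
    rw [blockSum, sum_filter]
    exact sum_congr rfl fun i _ => by split_ifs with hi <;> simp [hi, le_of_not_ge]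
  exact h ▸ (le_abs_self _).trans (abs_blockSum_le_cutNorm M _ T)

/-- `max_{S ⊆ Q, T} blockSum M S T`, through the positive parts of the row sums. -/
def rowPosSup (M : Matrix (Fin m) (Fin n) ℝ) (Q : Finset (Fin m)) : ℝ :=
  ⨆ T : Finset (Fin n), ∑ i ∈ Q, max (∑ j ∈ T, M i j) 0

lemma blockSum_le_rowPosSup (M : Matrix (Fin m) (Fin n) ℝ) {S Q : Finset (Fin m)} (hS : S ⊆ Q)
    (T : Finset (Fin n)) : blockSum M S T ≤ rowPosSup M Q :=
  (sum_le_sum_max_zero hS _).trans <|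
    le_ciSup_of_finite (fun T => ∑ i ∈ Q, max (∑ j ∈ T, M i j) 0) T

lemma rowPosSup_nonneg (M : Matrix (Fin m) (Fin n) ℝ) (Q : Finset (Fin m)) :
    0 ≤ rowPosSup M Q := by
  simpa [blockSum] using blockSum_le_rowPosSup M (empty_subset Q) ∅

lemma cutNorm_maskRows_le (Q : Finset (Fin m)) (M : Matrix (Fin m) (Fin n) ℝ) :
    cutNorm (maskRows Q M) ≤ rowPosSup M Q + rowPosSup (-M) Q :=
  cutNorm_le fun S T => by
    have hpos := blockSum_le_rowPosSup M (inter_subset_right (s₁ := S) (s₂ := Q)) T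
    have hneg := blockSum_le_rowPosSup (-M) (inter_subset_right (s₁ := S) (s₂ := Q)) T
    have := rowPosSup_nonneg M Q
    have := rowPosSup_nonneg (-M) Q
    rw [blockSum_neg] at hneg
    rw [blockSum_maskRows, abs_le]
    constructor <;> linarith

lemma subsetExp_half_sup_sum_sign_max_le_colSum (N : Matrix (Fin m) (Fin n) ℝ) :
    subsetExp (1 / 2) univ
        (fun g => ⨆ T : Finset (Fin n), ∑ i, subsetSign g i * max (∑ j ∈ T, N i j) 0)
      ≤ colSum N := by
  have hcontr := rademacher_contraction (φ := fun x => max x 0) (LipschitzWith.id.max_const 0)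
    univ 0 fun T i => ∑ j ∈ T, N i j
  simp only [Pi.zero_apply, zero_add] at hcontr
  refine hcontr.trans ?_
  calc _ ≤ subsetExp (1 / 2) univ (fun g => ∑ j, |∑ i, subsetSign g i * N i j|) :=
        subsetExp_mono half_mem_Icc fun g _ => ciSup_le fun T => by
          simp only [mul_sum]
          rw [sum_comm]
          exact (sum_le_sum fun j _ => le_abs_self _).trans
            (sum_le_sum_of_subset_of_nonneg (subset_univ T) fun j _ _ => abs_nonneg _)
    _ ≤ colSum N := by
        rw [subsetExp_sum]
        exact sum_le_sum fun j _ => subsetExp_half_abs_sum_sign_le _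

lemma subsetExp_colSum_maskRows_le (hp : p ∈ Set.Icc (0 : ℝ) 1) (M : Matrix (Fin m) (Fin n) ℝ) :
    subsetExp p univ (fun Q => colSum (maskRows Q M)) ≤ √p * colSum M := by
  simp only [colSum_maskRows, subsetExp_sum]
  rw [colSum, mul_sum]
  refine sum_le_sum fun j _ => ?_
  calc _ ≤ √(subsetExp p univ fun Q => ∑ i ∈ Q, M i j ^ 2) :=
        subsetExp_sqrt_le hp fun Q _ => sum_nonneg fun i _ => sq_nonneg _
    _ = √p * √(∑ i, M i j ^ 2) := by rw [subsetExp_sum_mem, Real.sqrt_mul hp.1]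

lemma subsetExp_colSum_maskCols (M : Matrix (Fin m) (Fin n) ℝ) :
    subsetExp p univ (fun Q => colSum (maskCols Q M)) = p * colSum M := by
  simp only [colSum_maskCols, subsetExp_sum_mem]
  rfl

lemma subsetExp_rowPosSup_le (hp : p ∈ Set.Icc (0 : ℝ) 1) (M : Matrix (Fin m) (Fin n) ℝ) :
    subsetExp p univ (rowPosSup M) ≤ p * cutNorm M + 2 * √p * colSum M := by
  set h : Fin m → Finset (Fin n) → ℝ := fun i T => max (∑ j ∈ T, M i j) 0
  have hcentered : ∀ Q : Finset (Fin m),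
      rowPosSup M Q ≤ (⨆ T, ∑ i ∈ Q, h i T - p * ∑ i, h i T) + p * cutNorm M :=
    fun Q => ciSup_le fun T => by
      have := le_ciSup_of_finite (fun T => ∑ i ∈ Q, h i T - p * ∑ i, h i T) T
      have := mul_le_mul_of_nonneg_left (sum_max_zero_le_cutNorm M T) hp.1
      linarith
  have hmasked : ∀ Q : Finset (Fin m), subsetExp (1 / 2) univ
      (fun g => ⨆ T, ∑ i ∈ Q, subsetSign g i * h i T) ≤ colSum (maskRows Q M) := fun Q => by
    refine le_of_eq_of_le (subsetExp_congr fun g _ => iSup_congr fun T => ?_)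
      (subsetExp_half_sup_sum_sign_max_le_colSum (maskRows Q M))
    rw [← sum_subset (subset_univ Q) fun i _ hi => by simp [maskRows, hi]]
    exact sum_congr rfl fun i hi => by simp [h, maskRows, hi]
  calc _ ≤ subsetExp p univ (fun Q => ⨆ T, ∑ i ∈ Q, h i T - p * ∑ i, h i T) + p * cutNorm M := by
        rw [← subsetExp_const (p := p) (s := (univ : Finset (Fin m))) (p * cutNorm M),
          ← subsetExp_add]
        exact subsetExp_mono hp fun Q _ => hcentered Q
    _ ≤ 2 * subsetExp p univ (fun Q => colSum (maskRows Q M)) + p * cutNorm M := by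
        gcongr
        refine (subsetExp_sup_centered_le hp h).trans <|
          (subsetExp_sup_sub_le_rademacher hp h).trans ?_
        gcongr 2 * ?_
        exact subsetExp_mono hp fun Q _ => hmasked Q
    _ ≤ 2 * (√p * colSum M) + p * cutNorm M := by
        gcongr
        exact subsetExp_colSum_maskRows_le hp M
    _ = _ := by ring

lemma subsetExp_cutNorm_maskRows_le (hp : p ∈ Set.Icc (0 : ℝ) 1) (M : Matrix (Fin m) (Fin n) ℝ) :
    subsetExp p univ (fun Q => cutNorm (maskRows Q M)) ≤ 2 * p * cutNorm M + 4 * √p * colSum M :=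
  calc _ ≤ subsetExp p univ (fun Q => rowPosSup M Q + rowPosSup (-M) Q) :=
        subsetExp_mono hp fun Q _ => cutNorm_maskRows_le Q M
    _ ≤ (p * cutNorm M + 2 * √p * colSum M) + (p * cutNorm (-M) + 2 * √p * colSum (-M)) := by
        rw [subsetExp_add]
        exact add_le_add (subsetExp_rowPosSup_le hp M) (subsetExp_rowPosSup_le hp (-M))
    _ = _ := by rw [cutNorm_neg, colSum_neg]; ring

lemma subsetExp_cutNorm_maskCols_le (hp : p ∈ Set.Icc (0 : ℝ) 1) (M : Matrix (Fin m) (Fin n) ℝ) :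
    subsetExp p univ (fun Q => cutNorm (maskCols Q M))
      ≤ 2 * p * cutNorm M + 4 * √p * colSum Mᵀ := by
  simpa only [maskRows_transpose, cutNorm_transpose] using subsetExp_cutNorm_maskRows_le hp Mᵀ

lemma subsetExp_subsetExp_cutNorm_mask_le (hp : p ∈ Set.Icc (0 : ℝ) 1)
    (M : Matrix (Fin m) (Fin n) ℝ) :
    subsetExp p univ (fun Q => subsetExp p univ fun R => cutNorm (maskRows Q (maskCols R M)))
      ≤ 4 * p ^ 2 * cutNorm M + 8 * (p * √p) * colSum Mᵀ + 4 * (p * √p) * colSum M := by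
  rw [subsetExp_comm]
  calc _ ≤ subsetExp p univ (fun R =>
          2 * p * cutNorm (maskCols R M) + 4 * √p * colSum (maskCols R M)) :=
        subsetExp_mono hp fun R _ => subsetExp_cutNorm_maskRows_le hp _
    _ = 2 * p * subsetExp p univ (fun R => cutNorm (maskCols R M)) + 4 * √p * (p * colSum M) := by
        rw [subsetExp_add, subsetExp_const_mul, subsetExp_const_mul, subsetExp_colSum_maskCols]
    _ ≤ 2 * p * (2 * p * cutNorm M + 4 * √p * colSum Mᵀ) + 4 * √p * (p * colSum M) := by
        have := hp.1
        gcongr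
        exact subsetExp_cutNorm_maskCols_le hp M
    _ = _ := by ring

end OneSided

section Decoupling

variable {n : ℕ} {p : ℝ}

lemma blockSum_eq_four_mul_subsetExp_half {B : Matrix (Fin n) (Fin n) ℝ} (hB : ∀ i, B i i = 0)
    (S T : Finset (Fin n)) :
    blockSum B S T = 4 * subsetExp (1 / 2) univ (fun I => blockSum B (S ∩ I) (T \ I)) := by
  have hind : ∀ I : Finset (Fin n), blockSum B (S ∩ I) (T \ I)
      = ∑ i ∈ S, ∑ j ∈ T, B i j * (if i ∈ I ∧ j ∉ I then 1 else 0) := fun I => by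
    simp only [blockSum, ← filter_mem_eq_inter, sdiff_eq_filter, sum_filter]
    exact sum_congr rfl fun i _ => by split_ifs <;> simp_all
  rw [subsetExp_congr fun I _ => hind I, subsetExp_sum, mul_sum, blockSum]
  refine sum_congr rfl fun i _ => ?_
  rw [subsetExp_sum, mul_sum]
  refine sum_congr rfl fun j _ => ?_
  rw [subsetExp_const_mul, subsetExp_half_mem_and_not_mem (mem_univ i) (mem_univ j)]
  split_ifs with hij
  · simp [hij, hB]
  · ring

lemma cutNorm_restrict_le_subsetExp_half {B : Matrix (Fin n) (Fin n) ℝ} (hB : ∀ i, B i i = 0)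
    (Q : Finset (Fin n)) :
    cutNorm (_root_.restrict Q B)
      ≤ 4 * subsetExp (1 / 2) univ (fun I => cutNorm (maskRows (Q ∩ I) (maskCols (Q \ I) B))) :=
  cutNorm_le fun S T => by
    rw [restrict_eq_maskRows_maskCols, blockSum_maskRows, blockSum_maskCols,
      blockSum_eq_four_mul_subsetExp_half hB, abs_mul, abs_of_pos four_pos]
    refine mul_le_mul_of_nonneg_left ((abs_subsetExp_le half_mem_Icc _).trans <|
      subsetExp_mono half_mem_Icc fun I _ => ?_) zero_le_four
    have h := abs_blockSum_le_cutNorm (maskRows (Q ∩ I) (maskCols (Q \ I) B)) S T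
    rwa [blockSum_maskRows, blockSum_maskCols, ← inter_assoc, ← inter_sdiff_assoc] at h

lemma subsetExp_cutNorm_restrict_le (hp : p ∈ Set.Icc (0 : ℝ) 1) {B : Matrix (Fin n) (Fin n) ℝ}
    (hB : ∀ i, B i i = 0) :
    subsetExp p univ (fun Q => cutNorm (_root_.restrict Q B))
      ≤ 4 * subsetExp p univ (fun Q =>
          subsetExp p univ fun R => cutNorm (maskRows Q (maskCols R B))) := by
  calc _ ≤ subsetExp p univ (fun Q => 4 * subsetExp (1 / 2) univ fun I =>
          cutNorm (maskRows (Q ∩ I) (maskCols (Q \ I) B))) :=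
        subsetExp_mono hp fun Q _ => cutNorm_restrict_le_subsetExp_half hB Q
    _ = 4 * subsetExp (1 / 2) univ (fun I => subsetExp p univ fun Q =>
          cutNorm (maskRows (Q ∩ I) (maskCols (Q \ I) B))) := by
        rw [subsetExp_const_mul, subsetExp_comm]
    _ ≤ _ := by
        gcongr
        refine (subsetExp_mono half_mem_Icc fun I _ => subsetExp_inter_sdiff_le hp
          (fun _ _ _ _ => cutNorm_maskRows_maskCols_mono B) I).trans_eq (subsetExp_const _)

end Decoupling

section Diagonal

variable {n : ℕ} {p : ℝ}

lemma blockSum_diagPart (A : Matrix (Fin n) (Fin n) ℝ) (S T : Finset (Fin n)) :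
    blockSum (diagPart A) S T = ∑ i ∈ S ∩ T, A i i := by
  simp only [blockSum, diagPart, Matrix.of_apply, sum_ite_eq, sum_ite_mem]

lemma sum_abs_diag_le_two_mul_cutNorm (A : Matrix (Fin n) (Fin n) ℝ) :
    ∑ i, |A i i| ≤ 2 * cutNorm (diagPart A) := by
  set P : Finset (Fin n) := {i | 0 ≤ A i i}
  set N : Finset (Fin n) := {i | ¬0 ≤ A i i}
  have hP := abs_blockSum_le_cutNorm (diagPart A) P P
  have hN := abs_blockSum_le_cutNorm (diagPart A) N N
  rw [blockSum_diagPart, inter_self] at hP hN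
  have hsplit : ∑ i, |A i i| = ∑ i ∈ P, A i i - ∑ i ∈ N, A i i := by
    rw [← sum_filter_add_sum_filter_not univ (fun i => 0 ≤ A i i), sub_eq_add_neg,
      ← sum_neg_distrib]
    exact congrArg₂ (· + ·) (sum_congr rfl fun i hi => abs_of_nonneg (mem_filter.1 hi).2)
      (sum_congr rfl fun i hi => abs_of_neg (not_le.1 (mem_filter.1 hi).2))
  rw [hsplit]
  linarith [le_abs_self (∑ i ∈ P, A i i), neg_abs_le (∑ i ∈ N, A i i)]

lemma subsetExp_cutNorm_restrict_diagPart_le (hp : p ∈ Set.Icc (0 : ℝ) 1)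
    (A : Matrix (Fin n) (Fin n) ℝ) :
    subsetExp p univ (fun Q => cutNorm (_root_.restrict Q (diagPart A)))
      ≤ 2 * p * cutNorm (diagPart A) := by
  calc _ ≤ subsetExp p univ (fun Q => ∑ i ∈ Q, |A i i|) :=
        subsetExp_mono hp fun Q _ => cutNorm_le fun S T => by
          rw [restrict_eq_maskRows_maskCols, blockSum_maskRows, blockSum_maskCols,
            blockSum_diagPart]
          exact (abs_sum_le_sum_abs _ _).trans <| sum_le_sum_of_subset_of_nonneg
            (fun i hi => (mem_inter.1 (mem_inter.1 hi).1).2) fun i _ _ => abs_nonneg _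
    _ ≤ 2 * p * cutNorm (diagPart A) := by
        rw [subsetExp_sum_mem]
        nlinarith [sum_abs_diag_le_two_mul_cutNorm A, hp.1]

lemma abs_sub_diagPart_le (A : Matrix (Fin n) (Fin n) ℝ) (i j : Fin n) :
    |(A - diagPart A) i j| ≤ |A i j| := by
  by_cases h : i = j <;> simp [diagPart, h]

lemma cutNorm_restrict_le (Q : Finset (Fin n)) (A : Matrix (Fin n) (Fin n) ℝ) :
    cutNorm (_root_.restrict Q A)
      ≤ cutNorm (_root_.restrict Q (A - diagPart A))
        + cutNorm (_root_.restrict Q (diagPart A)) := by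
  have hA : _root_.restrict Q A
      = _root_.restrict Q (A - diagPart A) + _root_.restrict Q (diagPart A) := by
    ext i j
    simp [_root_.restrict, ite_add_ite]
  exact hA ▸ cutNorm_add_le _ _

end Diagonal

lemma ESub_eq_subsetExp {n : ℕ} (p : ℝ) (f : Finset (Fin n) → ℝ) :
    ESub p f = subsetExp p univ f := by
  rw [subsetExp, powerset_univ, card_univ, Fintype.card_fin]
  rfl

lemma rpow_three_halves {p : ℝ} (hp : 0 ≤ p) : p ^ ((3 : ℝ) / 2) = p * √p := by
  rw [show (3 : ℝ) / 2 = 1 + 1 / 2 by norm_num, Real.rpow_add' hp (by norm_num), Real.rpow_one,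
    ← Real.sqrt_eq_rpow]

/-- Cut-norm decay: for a random subset `Q` of expected cardinality `q`,
`E‖A|_{Q×Q}‖_C ≤ C[(q/n)²‖A−D(A)‖_C + (q/n)‖D(A)‖_C
  + (q/n)^{3/2}(‖A‖_Col + ‖Aᵀ‖_Col)]`. -/
theorem cutNorm_decay :
    ∃ C : ℝ, 0 < C ∧
      ∀ (n : ℕ) (A : Matrix (Fin n) (Fin n) ℝ) (q : ℝ),
        0 < q → q ≤ n →
        ESub (q / n) (fun Q => cutNorm (restrict Q A))
          ≤ C * ((q / n) ^ 2 * cutNorm (A - diagPart A)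
              + (q / n) * cutNorm (diagPart A)
              + (q / n) ^ ((3 : ℝ) / 2) * (colSum A + colSum A.transpose)) := by
  refine ⟨32, by norm_num, fun n A q hq hqn => ?_⟩
  set p := q / n
  have hp : p ∈ Set.Icc (0 : ℝ) 1 := ⟨by positivity, div_le_one_of_le₀ hqn n.cast_nonneg⟩
  set B := A - diagPart A
  have hB : ∀ i, B i i = 0 := fun i => by simp [B, diagPart]
  have hsplit := subsetExp_mono hp fun Q (_ : Q ⊆ univ) => cutNorm_restrict_le Q A
  rw [subsetExp_add] at hsplit
  have hoff := (subsetExp_cutNorm_restrict_le hp hB).trans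
    (mul_le_mul_of_nonneg_left (subsetExp_subsetExp_cutNorm_mask_le hp B) zero_le_four)
  have hdiag := subsetExp_cutNorm_restrict_diagPart_le hp A
  have hpp : 0 ≤ p * √p := mul_nonneg hp.1 (Real.sqrt_nonneg p)
  have hcol := mul_le_mul_of_nonneg_left (colSum_le_colSum (abs_sub_diagPart_le A)) hpp
  have hcolT := mul_le_mul_of_nonneg_left
    (colSum_le_colSum (M := Bᵀ) (N := Aᵀ) fun i j => abs_sub_diagPart_le A j i) hpp
  rw [ESub_eq_subsetExp, rpow_three_halves hp.1]
  linarith [mul_nonneg (sq_nonneg p) (cutNorm_nonneg B),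
    mul_nonneg hp.1 (cutNorm_nonneg (diagPart A)),
    mul_nonneg hpp (colSum_nonneg A), mul_nonneg hpp (colSum_nonneg Aᵀ)]
end
end

section
/- Lower bound for the ∞→1 norm of sign submatrices: for any n×n matrix A with entries ±1 and any subset Q ⊆ {1,…,n}, ‖A|_{Q×Q}‖_{∞→1} ≥ |Q|^{3/2}/√2. -/
open scoped Classical
noncomputable section

/-- ℓ∞ → ℓ₁ operator norm. -/
def normInfOne {m n : ℕ} (A : Matrix (Fin m) (Fin n) ℝ) : ℝ :=
  sSup {t | ∃ x : Fin n → ℝ, (∀ j, |x j| ≤ 1) ∧ t = ∑ i, |A.mulVec x i|}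

/-!
Encode a sign vector `x ∈ {±1}^Q` by the set `T ⊆ Q` where it is `+1`, and average over all
`2^|Q|` of them. For a fixed row `a` of `A`, replacing `T` by `T ∆ {j ∈ Q | a j = -1}` is a
bijection of the subsets of `Q` that turns `∑_{j∈Q} a j x j` into `∑_{j∈Q} x j = 2|T| - |Q|`,
so the average of `|∑_{j∈Q} a j x j|` is the exact Rademacher mean
`2^{-k} ∑_t C(k,t) |2t - k|`, `k = |Q|`. Since `C(k,t)(k - 2t) = k (C(k-1,t) - C(k-1,t-1))`
telescopes and the signed sum vanishes, this is `2^{1-k} k C(k-1, ⌊(k-1)/2⌋)`, which the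
central binomial bound `16^m (m+1) ≤ ((2m+1) C(2m,m))²` puts above `√(k/2)`: Khinchine's
inequality with constant `1/√2` for ±1 coefficients. Summing over the rows in `Q`, some sign
vector `x` has `∑_i |(A|_{Q×Q} x)_i| ≥ |Q| √(|Q|/2) = |Q|^{3/2}/√2`.
-/

namespace Nat

theorem sixteen_pow_mul_succ_le_sq_mul_centralBinom (m : ℕ) :
    16 ^ m * (m + 1) ≤ ((2 * m + 1) * m.centralBinom) ^ 2 := by
  induction m with
  | zero => simp
  | succ m ih =>
    have hrec := succ_mul_centralBinom_succ m
    refine Nat.le_of_mul_le_mul_right (c := (m + 1) ^ 2) ?_ (pow_pos m.succ_pos 2)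
    calc 16 ^ (m + 1) * (m + 1 + 1) * (m + 1) ^ 2
        = 4 * (m + 1) * (4 * (m + 2) * (m + 1)) * 16 ^ m := by ring
      _ ≤ 4 * (m + 1) * (2 * m + 3) ^ 2 * 16 ^ m := by gcongr; nlinarith
      _ = 4 * (2 * m + 3) ^ 2 * (16 ^ m * (m + 1)) := by ring
      _ ≤ 4 * (2 * m + 3) ^ 2 * ((2 * m + 1) * m.centralBinom) ^ 2 := by gcongr
      _ = ((2 * m + 3) * (2 * (2 * m + 1) * m.centralBinom)) ^ 2 := by ring
      _ = ((2 * (m + 1) + 1) * (m + 1).centralBinom) ^ 2 * (m + 1) ^ 2 := by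
        rw [← hrec]; ring

theorem four_pow_le_two_mul_succ_mul_choose_half_sq (n : ℕ) :
    4 ^ n ≤ 2 * (n + 1) * n.choose (n / 2) ^ 2 := by
  obtain ⟨m, rfl | rfl⟩ := n.even_or_odd'
  · have key := sixteen_pow_mul_succ_le_sq_mul_centralBinom m
    rw [show 2 * m / 2 = m by omega, ← centralBinom_eq_two_mul_choose, pow_mul]
    refine Nat.le_of_mul_le_mul_right (c := m + 1) ?_ m.succ_pos
    calc (4 ^ 2) ^ m * (m + 1) = 16 ^ m * (m + 1) := by norm_num
      _ ≤ ((2 * m + 1) * m.centralBinom) ^ 2 := key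
      _ ≤ 2 * (2 * m + 1) * m.centralBinom ^ 2 * (m + 1) := by
        rw [mul_pow]; nlinarith [Nat.zero_le (m.centralBinom ^ 2)]
  · have key := sixteen_pow_mul_succ_le_sq_mul_centralBinom m
    have hchoose : (2 * m + 1).choose m * (m + 1) = (2 * m + 1) * m.centralBinom := by
      rw [centralBinom_eq_two_mul_choose, add_one_mul_choose_eq, choose_symm_half]
    rw [show (2 * m + 1) / 2 = m by omega]
    refine Nat.le_of_mul_le_mul_right (c := (m + 1) ^ 2) ?_ (pow_pos m.succ_pos 2)
    calc 4 ^ (2 * m + 1) * (m + 1) ^ 2 = 4 * (m + 1) * (16 ^ m * (m + 1)) := by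
          rw [pow_succ, pow_mul]; ring
      _ ≤ 4 * (m + 1) * ((2 * m + 1) * m.centralBinom) ^ 2 := by gcongr
      _ = 2 * (2 * m + 1 + 1) * (2 * m + 1).choose m ^ 2 * (m + 1) ^ 2 := by
        rw [← hchoose]; ring

theorem cast_choose_mul_sub {R : Type*} [Ring R] (n k : ℕ) :
    (n.choose k : R) * (n - k) = n.choose (k + 1) * (k + 1) := by
  rcases le_or_gt k n with hk | hk
  · rw [← cast_sub hk, ← cast_mul, ← choose_succ_right_eq]; push_cast; rfl
  · simp [choose_eq_zero_of_lt hk, choose_eq_zero_of_lt (hk.trans k.lt_succ_self)]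

end Nat

section Binomial

open Finset

lemma sum_range_choose_mul_sub_two_mul {R : Type*} [CommRing R] (n M : ℕ) :
    ∑ t ∈ range (M + 1), ((n + 1).choose t : R) * (n + 1 - 2 * t) = (n + 1) * n.choose M := by
  induction M with
  | zero => simp
  | succ M ih =>
    rw [sum_range_succ, ih, Nat.choose_succ_succ', Nat.cast_add]
    push_cast
    linear_combination 2 * Nat.cast_choose_mul_sub (R := R) n M

theorem two_mul_succ_mul_choose_le_sum_choose_mul_abs {n M : ℕ} (hM : M ≤ n) :
    2 * (n + 1) * (n.choose M : ℝ) ≤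
      ∑ t ∈ range (n + 2), ((n + 1).choose t : ℝ) * |2 * (t : ℝ) - (n + 1)| := by
  set c : ℕ → ℝ := fun t => (n + 1).choose t
  have htotal := sum_range_choose_mul_sub_two_mul (R := ℝ) n (n + 1)
  rw [Nat.choose_succ_self, Nat.cast_zero, mul_zero,
    ← sum_range_add_sum_Ico _ (show M + 1 ≤ n + 1 + 1 by omega),
    sum_range_choose_mul_sub_two_mul] at htotal
  rw [← sum_range_add_sum_Ico _ (show M + 1 ≤ n + 2 by omega)]
  have hlow : ∑ t ∈ range (M + 1), c t * (n + 1 - 2 * t) ≤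
      ∑ t ∈ range (M + 1), c t * |2 * (t : ℝ) - (n + 1)| :=
    sum_le_sum fun t _ => mul_le_mul_of_nonneg_left (abs_sub_comm (2 * (t : ℝ)) _ ▸ le_abs_self _)
      (Nat.cast_nonneg _)
  have hhigh : -∑ t ∈ Ico (M + 1) (n + 2), c t * (n + 1 - 2 * t) ≤
      ∑ t ∈ Ico (M + 1) (n + 2), c t * |2 * (t : ℝ) - (n + 1)| := by
    rw [← sum_neg_distrib]
    exact sum_le_sum fun t _ => by
      rw [← mul_neg, neg_sub]; exact mul_le_mul_of_nonneg_left (le_abs_self _) (Nat.cast_nonneg _)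
  rw [sum_range_choose_mul_sub_two_mul] at hlow
  linarith

theorem two_pow_mul_sqrt_le_sum_choose_mul_abs (k : ℕ) :
    2 ^ k * √(k / 2) ≤ ∑ t ∈ range (k + 1), (k.choose t : ℝ) * |2 * (t : ℝ) - k| := by
  rcases k with _ | n
  · simp
  have hbinom : (4 : ℝ) ^ n ≤ 2 * (n + 1) * (n.choose (n / 2)) ^ 2 := by
    exact_mod_cast Nat.four_pow_le_two_mul_succ_mul_choose_half_sq n
  have hsq : (2 ^ (n + 1) * √((n + 1 : ℕ) / 2) : ℝ) ^ 2 ≤ (2 * (n + 1) * n.choose (n / 2)) ^ 2 := by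
    have hpow : ((2 : ℝ) ^ (n + 1)) ^ 2 = 4 * 4 ^ n := by
      rw [← pow_mul, mul_comm, pow_mul]; norm_num [pow_succ]; ring
    rw [mul_pow, Real.sq_sqrt (by positivity), hpow]
    push_cast
    nlinarith
  calc (2 : ℝ) ^ (n + 1) * √((n + 1 : ℕ) / 2) ≤ 2 * (n + 1) * n.choose (n / 2) :=
        (pow_le_pow_iff_left₀ (by positivity) (by positivity) two_ne_zero).mp hsq
    _ ≤ _ := by
      push_cast
      exact two_mul_succ_mul_choose_le_sum_choose_mul_abs (Nat.div_le_self n 2)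

end Binomial

section SignVec

open Finset
open scoped symmDiff

variable {ι : Type*} [DecidableEq ι]

def signVec (T : Finset ι) (j : ι) : ℝ := if j ∈ T then 1 else -1

lemma abs_signVec (T : Finset ι) (j : ι) : |signVec T j| = 1 := by
  unfold signVec; split_ifs <;> simp

lemma signVec_symmDiff {a : ι → ℝ} {Q : Finset ι} {j : ι} (hj : j ∈ Q) (ha : a j = 1 ∨ a j = -1)
    (T : Finset ι) : signVec (T ∆ Q.filter (a · = -1)) j = a j * signVec T j := by
  unfold signVec
  rcases ha with h | h <;> by_cases hT : j ∈ T <;> norm_num [mem_symmDiff, hj, hT, h]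

lemma sum_powerset_symmDiff {M : Type*} [AddCommMonoid M] {Q N : Finset ι} (hN : N ⊆ Q)
    (f : Finset ι → M) : ∑ T ∈ Q.powerset, f (T ∆ N) = ∑ T ∈ Q.powerset, f T := by
  have hmaps : ∀ T ∈ Q.powerset, T ∆ N ∈ Q.powerset := fun T hT =>
    mem_powerset.mpr (symmDiff_le_sup.trans (sup_le (mem_powerset.mp hT) hN))
  exact sum_nbij' (· ∆ N) (· ∆ N) hmaps hmaps (fun T _ => symmDiff_symmDiff_cancel_right N T)
    (fun T _ => symmDiff_symmDiff_cancel_right N T) fun _ _ => rfl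

lemma sum_signVec {Q T : Finset ι} (hT : T ⊆ Q) : ∑ j ∈ Q, signVec T j = 2 * #T - #Q := by
  have h : ∀ j, signVec T j = 2 * (if j ∈ T then 1 else 0) - 1 := fun j => by
    unfold signVec; split_ifs <;> norm_num
  simp only [h, sum_sub_distrib, ← mul_sum, sum_boole, filter_mem_eq_inter, inter_eq_right.mpr hT,
    sum_const, nsmul_eq_mul, mul_one]

lemma sum_powerset_abs_sum_signVec (Q : Finset ι) :
    ∑ T ∈ Q.powerset, |∑ j ∈ Q, signVec T j| =
      ∑ t ∈ range (#Q + 1), ((#Q).choose t : ℝ) * |2 * (t : ℝ) - #Q| := by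
  rw [sum_congr rfl fun T hT => by rw [sum_signVec (mem_powerset.mp hT)],
    sum_powerset_apply_card (fun t => |2 * (t : ℝ) - #Q|)]
  simp only [nsmul_eq_mul]

lemma sum_powerset_abs_sum_mul_signVec {Q : Finset ι} {a : ι → ℝ}
    (ha : ∀ j ∈ Q, a j = 1 ∨ a j = -1) :
    ∑ T ∈ Q.powerset, |∑ j ∈ Q, a j * signVec T j| = ∑ T ∈ Q.powerset, |∑ j ∈ Q, signVec T j| := by
  rw [← sum_powerset_symmDiff (filter_subset (a · = -1) Q) fun T => |∑ j ∈ Q, signVec T j|]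
  exact sum_congr rfl fun T _ => by rw [sum_congr rfl fun j hj => signVec_symmDiff hj (ha j hj) T]

theorem two_pow_mul_sqrt_le_sum_powerset_abs_sum_mul_signVec {Q : Finset ι} {a : ι → ℝ}
    (ha : ∀ j ∈ Q, a j = 1 ∨ a j = -1) :
    2 ^ #Q * √(#Q / 2) ≤ ∑ T ∈ Q.powerset, |∑ j ∈ Q, a j * signVec T j| := by
  rw [sum_powerset_abs_sum_mul_signVec ha, sum_powerset_abs_sum_signVec]
  exact two_pow_mul_sqrt_le_sum_choose_mul_abs _

end SignVec

section NormInfOne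

open scoped Matrix

lemma abs_mulVec_le_sum_abs {m n : ℕ} (A : Matrix (Fin m) (Fin n) ℝ) {x : Fin n → ℝ}
    (hx : ∀ j, |x j| ≤ 1) (i : Fin m) : |(A *ᵥ x) i| ≤ ∑ j, |A i j| :=
  calc |(A *ᵥ x) i| = |∑ j, A i j * x j| := rfl
    _ ≤ ∑ j, |A i j * x j| := Finset.abs_sum_le_sum_abs _ _
    _ ≤ ∑ j, |A i j| := Finset.sum_le_sum fun j _ => by
      rw [abs_mul]; exact mul_le_of_le_one_right (abs_nonneg _) (hx j)

lemma sum_abs_mulVec_le_normInfOne {m n : ℕ} (A : Matrix (Fin m) (Fin n) ℝ) {x : Fin n → ℝ}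
    (hx : ∀ j, |x j| ≤ 1) : ∑ i, |(A *ᵥ x) i| ≤ normInfOne A := by
  refine le_csSup ⟨∑ i, ∑ j, |A i j|, ?_⟩ ⟨x, hx, rfl⟩
  rintro _ ⟨y, hy, rfl⟩
  exact Finset.sum_le_sum fun i _ => abs_mulVec_le_sum_abs A hy i

lemma sum_abs_restrict_mulVec {n : ℕ} (Q : Finset (Fin n)) (A : Matrix (Fin n) (Fin n) ℝ)
    (x : Fin n → ℝ) : ∑ i, |(restrict Q A *ᵥ x) i| = ∑ i ∈ Q, |∑ j ∈ Q, A i j * x j| := by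
  have hrow : ∀ i, (restrict Q A *ᵥ x) i = if i ∈ Q then ∑ j ∈ Q, A i j * x j else 0 := by
    intro i
    by_cases hi : i ∈ Q <;> simp [restrict, Matrix.mulVec, dotProduct, hi, ite_mul, Finset.sum_ite_mem]
  simp only [hrow, apply_ite, abs_zero, Finset.sum_ite_mem, Finset.univ_inter]

end NormInfOne

/-- For any `±1` matrix `A` and any `Q ⊆ {1,…,n}`,
`‖A|_{Q×Q}‖_{∞→1} ≥ |Q|^{3/2}/√2`. -/
theorem sign_submatrix_lower {n : ℕ} (A : Matrix (Fin n) (Fin n) ℝ)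
    (hA : ∀ i j, A i j = 1 ∨ A i j = -1) (Q : Finset (Fin n)) :
    (Q.card : ℝ) ^ ((3 : ℝ) / 2) / Real.sqrt 2 ≤ normInfOne (restrict Q A) := by
  set k : ℝ := (Q.card : ℝ)
  have hpow : k ^ ((3 : ℝ) / 2) / √2 = k * √(k / 2) := by
    rw [show (3 : ℝ) / 2 = 1 + 1 / 2 by norm_num, Real.rpow_add' (by positivity) (by norm_num),
      Real.rpow_one, ← Real.sqrt_eq_rpow, Real.sqrt_div' _ (by norm_num), mul_div_assoc]
  have havg : ∑ _T ∈ Q.powerset, k * √(k / 2) ≤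
      ∑ T ∈ Q.powerset, ∑ i ∈ Q, |∑ j ∈ Q, A i j * signVec T j| :=
    calc ∑ _T ∈ Q.powerset, k * √(k / 2) = ∑ _i ∈ Q, 2 ^ Q.card * √(k / 2) := by
          simp only [Finset.sum_const, Finset.card_powerset, nsmul_eq_mul]; push_cast; ring
      _ ≤ ∑ i ∈ Q, ∑ T ∈ Q.powerset, |∑ j ∈ Q, A i j * signVec T j| :=
          Finset.sum_le_sum fun i _ =>
            two_pow_mul_sqrt_le_sum_powerset_abs_sum_mul_signVec fun j _ => hA i j
      _ = _ := Finset.sum_comm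
  obtain ⟨T, -, hT⟩ := Finset.exists_le_of_sum_le (Finset.powerset_nonempty Q) havg
  calc k ^ ((3 : ℝ) / 2) / √2 = k * √(k / 2) := hpow
    _ ≤ ∑ i ∈ Q, |∑ j ∈ Q, A i j * signVec T j| := hT
    _ = ∑ i, |(restrict Q A).mulVec (signVec T) i| := (sum_abs_restrict_mulVec Q A _).symm
    _ ≤ normInfOne (restrict Q A) :=
      sum_abs_mulVec_le_normInfOne _ fun j => (abs_signVec T j).le
end
end
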